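/- arXiv:1006.0824 — 7 statements merged into one kernel-verified Lean document; each statement's English description precedes it below -/
import Mathlib

section
/- For every n ≥ 2, the Fibonacci number F_{3·2^{n-1}} is divisible by 2^{n+1}. -/
theorem two_pow_dvd_fib (n : ℕ) (hn : 2 ≤ n) :
    2 ^ (n + 1) ∣ Nat.fib (3 * 2 ^ (n - 1)) := by
  induction n, hn using Nat.le_induction with
  | base => decide
  | succ n hn ih =>
    have h1 : 3 * 2 ^ (n + 1 - 1) = 2 * (3 * 2 ^ (n - 1)) := by
      have h : 2 ^ n = 2 * 2 ^ (n - 1) := by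
        conv_lhs => rw [show n = n - 1 + 1 by omega]
        rw [pow_succ]; ring
      rw [Nat.add_sub_cancel, h]; ring
    rw [h1, Nat.fib_two_mul]
    set m := 3 * 2 ^ (n - 1)
    have heven : 2 ∣ Nat.fib m := dvd_trans (dvd_pow_self 2 (by omega)) ih
    have h2 : 2 ∣ 2 * Nat.fib (m + 1) - Nat.fib m := by
      obtain ⟨k, hk⟩ := heven
      have hle : Nat.fib m ≤ 2 * Nat.fib (m + 1) :=
        le_trans (Nat.fib_le_fib_succ) (by omega)
      omega
    calc 2 ^ (n + 1 + 1) = 2 ^ (n + 1) * 2 := by ring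
    _ ∣ Nat.fib m * (2 * Nat.fib (m + 1) - Nat.fib m) := mul_dvd_mul ih h2
end

section
/- For every n ≥ 2, the 2-adic valuation of F_{3·2^{n-1}+1} − 1 is exactly n; that is, 2^n divides F_{3·2^{n-1}+1} − 1 but 2^{n+1} does not. -/
private lemma fib_aux (n : ℕ) (hn : 2 ≤ n) :
    ∃ u v : ℤ, Odd u ∧ Odd v ∧
      (Nat.fib (3 * 2 ^ (n - 1)) : ℤ) = 2 ^ (n + 1) * u ∧
      (Nat.fib (3 * 2 ^ (n - 1) + 1) : ℤ) = 1 + 2 ^ n * v := by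
  induction n, hn using Nat.le_induction with
  | base =>
    refine ⟨1, 3, ⟨0, by ring⟩, ⟨1, by ring⟩, ?_, ?_⟩ <;> norm_num [show (3 : ℕ) * 2 ^ 1 = 6 by norm_num]
  | succ n hn ih =>
    obtain ⟨u, v, hu, hv, ha, hb⟩ := ih
    obtain ⟨k, rfl⟩ : ∃ k, n = k + 2 := ⟨n - 2, by omega⟩
    set m := 3 * 2 ^ (k + 2 - 1) with hm
    have h2m : 3 * 2 ^ (k + 3 - 1) = 2 * m := by
      simp only [hm, show k + 3 - 1 = k + 2 from rfl, show k + 2 - 1 = k + 1 from rfl]; ring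
    have hfle : Nat.fib m ≤ 2 * Nat.fib (m + 1) :=
      le_trans (Nat.fib_le_fib_succ) (by omega)
    have heven : (Nat.fib (2 * m) : ℤ) =
        (Nat.fib m : ℤ) * (2 * (Nat.fib (m + 1) : ℤ) - (Nat.fib m : ℤ)) := by
      rw [Nat.fib_two_mul]
      push_cast [Nat.cast_sub hfle]
      ring
    have hodd : (Nat.fib (2 * m + 1) : ℤ) =
        (Nat.fib (m + 1) : ℤ) ^ 2 + (Nat.fib m : ℤ) ^ 2 := by
      rw [Nat.fib_two_mul_add_one]; push_cast; ring
    refine ⟨u * (1 + 2 ^ (k + 2) * (v - u)),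
            v + 2 ^ (k + 1) * v ^ 2 + 2 ^ (k + 3) * u ^ 2, ?_, ?_, ?_, ?_⟩
    · exact hu.mul (by rw [add_comm]; exact Even.add_one ⟨2 ^ (k + 1) * (v - u), by ring⟩)
    · have he : Even (2 ^ (k + 1) * v ^ 2 + 2 ^ (k + 3) * u ^ 2) :=
        ⟨2 ^ k * v ^ 2 + 2 ^ (k + 2) * u ^ 2, by ring⟩
      have := hv.add_even he
      convert this using 1; ring
    · rw [h2m, heven, ha, hb]
      simp only [show k + 2 - 1 = k + 1 from rfl] at *
      ring
    · rw [h2m, hodd, ha, hb]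
      simp only [show k + 2 - 1 = k + 1 from rfl] at *
      ring

theorem two_adic_val_fib_sub_one (n : ℕ) (hn : 2 ≤ n) :
    (2 : ℤ) ^ n ∣ (Nat.fib (3 * 2 ^ (n - 1) + 1) : ℤ) - 1 ∧
      ¬ (2 : ℤ) ^ (n + 1) ∣ (Nat.fib (3 * 2 ^ (n - 1) + 1) : ℤ) - 1 := by
  obtain ⟨u, v, hu, hv, ha, hb⟩ := fib_aux n hn
  rw [hb]
  constructor
  · exact ⟨v, by ring⟩
  · rintro ⟨c, hc⟩
    have : v = 2 * c := by
      have h2 : (2 : ℤ) ^ n ≠ 0 := by positivity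
      have : (2 : ℤ) ^ n * v = 2 ^ n * (2 * c) := by
        rw [pow_succ] at hc; linarith
      exact mul_left_cancel₀ h2 this
    obtain ⟨w, hw⟩ := hv
    omega
end

section
/- For every integer l ≥ 3, the minimal period κ(l) of the Fibonacci sequence modulo l is even. -/
noncomputable def kappa (m : ℕ) : ℕ :=
  sInf {l : ℕ | 0 < l ∧ Nat.fib l % m = 0 ∧ Nat.fib (l + 1) % m = 1}

lemma cassini_int (n : ℕ) :
    ((Nat.fib (n+1) : ℤ))^2 - Nat.fib (n+2) * Nat.fib n = (-1)^n := by
  induction n with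
  | zero => simp
  | succ n ih =>
    have h : (Nat.fib (n+3) : ℤ) = Nat.fib (n+1) + Nat.fib (n+2) := by
      exact_mod_cast congrArg (Nat.cast : ℕ → ℤ) (Nat.fib_add_two (n := n+1))
    have h2 : (Nat.fib (n+2) : ℤ) = Nat.fib n + Nat.fib (n+1) := by
      exact_mod_cast congrArg (Nat.cast : ℕ → ℤ) (Nat.fib_add_two (n := n))
    rw [pow_succ]
    linear_combination (-(Nat.fib (n+1) : ℤ)) * h + (Nat.fib (n+2) : ℤ) * h2 - ih

def fibShift (m : ℕ) : Equiv.Perm (ZMod m × ZMod m) where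
  toFun p := (p.2, p.1 + p.2)
  invFun p := (p.2 - p.1, p.1)
  left_inv p := by simp
  right_inv p := by simp

lemma fibShift_pow (m n : ℕ) :
    ((fibShift m) ^ n) ((0 : ZMod m), (1 : ZMod m)) =
      ((Nat.fib n : ZMod m), (Nat.fib (n+1) : ZMod m)) := by
  induction n with
  | zero => simp
  | succ n ih =>
    rw [pow_succ', Equiv.Perm.mul_apply, ih]
    have : (Nat.fib (n+2) : ZMod m) = (Nat.fib n : ZMod m) + (Nat.fib (n+1) : ZMod m) := by
      rw [Nat.fib_add_two]; push_cast; ring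
    simp [fibShift, this]

lemma kappa_set_nonempty (m : ℕ) (hm : 3 ≤ m) :
    {l : ℕ | 0 < l ∧ Nat.fib l % m = 0 ∧ Nat.fib (l + 1) % m = 1}.Nonempty := by
  haveI : NeZero m := ⟨by omega⟩
  set N := orderOf (fibShift m) with hN
  have hNpos : 0 < N := orderOf_pos _
  have hpow : (fibShift m) ^ N = 1 := pow_orderOf_eq_one _
  have h := fibShift_pow m N
  rw [hpow] at h
  simp only [Equiv.Perm.coe_one, id_eq, Prod.mk.injEq] at h
  refine ⟨N, hNpos, ?_, ?_⟩
  · have : m ∣ Nat.fib N := (ZMod.natCast_eq_zero_iff _ _).mp h.1.symm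
    omega
  · have h1 : (Nat.fib (N+1) : ZMod m) = ((1 : ℕ) : ZMod m) := by simpa using h.2.symm
    have h2 := (ZMod.natCast_eq_natCast_iff' _ _ _).mp h1
    rwa [Nat.mod_eq_of_lt (show 1 < m by omega)] at h2

theorem kappa_even (l : ℕ) (hl : 3 ≤ l) : 2 ∣ kappa l := by
  obtain ⟨hpos, h0, h1⟩ := Nat.sInf_mem (kappa_set_nonempty l hl)
  have hpos' : 0 < kappa l := hpos
  have h0' : Nat.fib (kappa l) % l = 0 := h0
  have h1' : Nat.fib (kappa l + 1) % l = 1 := h1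
  by_contra hodd
  obtain ⟨m, hm⟩ : ∃ m, kappa l = m + 1 := ⟨kappa l - 1, by omega⟩
  have hmeven : m % 2 = 0 := by omega
  rw [hm] at h0' h1'
  -- cast facts in ZMod l
  have c0 : (Nat.fib (m+1) : ZMod l) = 0 :=
    (ZMod.natCast_eq_zero_iff _ _).mpr (Nat.dvd_of_mod_eq_zero h0')
  have c1 : (Nat.fib (m+2) : ZMod l) = 1 := by
    have h3 : (Nat.fib (m+1+1) : ZMod l) = ((1 : ℕ) : ZMod l) :=
      (ZMod.natCast_eq_natCast_iff' _ _ _).mpr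
        (by rw [h1', Nat.mod_eq_of_lt (show 1 < l by omega)])
    simpa using h3
  have cm : (Nat.fib m : ZMod l) = 1 := by
    have hrec : (Nat.fib (m+2) : ZMod l) = (Nat.fib m : ZMod l) + (Nat.fib (m+1) : ZMod l) := by
      rw [Nat.fib_add_two]; push_cast; ring
    rw [c0, add_zero] at hrec
    rw [← hrec, c1]
  -- Cassini identity cast down to ZMod l
  have hcasZ : ((Nat.fib (m+1) : ZMod l))^2 - (Nat.fib (m+2) : ZMod l) * (Nat.fib m : ZMod l)
      = (-1 : ZMod l)^m := by
    have := congrArg (Int.cast : ℤ → ZMod l) (cassini_int m)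
    push_cast at this
    convert this using 2
  rw [c0, c1, cm, (Nat.even_iff.mpr hmeven).neg_one_pow] at hcasZ
  have h2 : ((2 : ℕ) : ZMod l) = 0 := by
    push_cast
    linear_combination -hcasZ
  have hdvd := (ZMod.natCast_eq_zero_iff 2 l).mp h2
  have := Nat.le_of_dvd (by norm_num) hdvd
  omega
end

section
/- Let p be an odd prime, e ≥ 1 an integer, and l a multiple of κ(p). If p^e divides F_l, then l is a period of the Fibonacci sequence modulo p^e, i.e. κ(p^e) divides l. -/
open Nat

private lemma cassini' (n : ℕ) :
    (fib (n+2) : ℤ) * fib n - (fib (n+1):ℤ)^2 = (-1)^(n+1) := by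
  induction n with
  | zero => simp
  | succ n ih =>
    have h1 : (fib (n+3) : ℤ) = fib (n+1) + fib (n+2) := by
      exact_mod_cast congrArg (Nat.cast (R := ℤ)) (fib_add_two (n := n+1))
    have h2 : (fib (n+2) : ℤ) = fib n + fib (n+1) := by
      exact_mod_cast congrArg (Nat.cast (R := ℤ)) (fib_add_two (n := n))
    rw [show n+1+2 = n+3 from rfl, pow_succ]
    linear_combination (fib (n+1):ℤ) * h1 - (fib (n+2):ℤ) * h2 - ih

private lemma fib_shift {m : ℕ} {a : ℕ} (ha0 : (fib a : ZMod m) = 0)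
    (ha1 : (fib (a+1) : ZMod m) = 1) (n : ℕ) : (fib (n + a) : ZMod m) = fib n := by
  rcases a with _ | b
  · simp
  · have h2 : (fib (b+2) : ZMod m) = fib b + fib (b+1) := by
      exact_mod_cast congrArg (Nat.cast (R := ZMod m)) (fib_add_two (n := b))
    have hb : (fib b : ZMod m) = 1 := by
      rw [show b+1+1 = b+2 from rfl] at ha1
      rw [ha1, ha0] at h2; linear_combination -h2
    have hadd : fib (n + b + 1) = fib n * fib b + fib (n + 1) * fib (b + 1) := fib_add n b
    have : (fib (n + (b+1)) : ZMod m)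
        = (fib n : ZMod m) * fib b + (fib (n+1) : ZMod m) * fib (b+1) := by
      rw [show n + (b+1) = n + b + 1 from rfl, hadd]; push_cast; ring
    rw [this, hb, ha0]; ring

private lemma period_of_dvd {m k n : ℕ} (hk0 : (fib k : ZMod m) = 0)
    (hk1 : (fib (k+1) : ZMod m) = 1) (h : k ∣ n) :
    (fib n : ZMod m) = 0 ∧ (fib (n+1) : ZMod m) = 1 := by
  obtain ⟨t, rfl⟩ := h
  induction t with
  | zero => simp
  | succ t ih =>
    have e1 : k * (t+1) = k * t + k := by ring
    have e2 : k * (t+1) + 1 = (k * t + 1) + k := by ring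
    constructor
    · rw [e1, fib_shift hk0 hk1]; exact ih.1
    · rw [e2, fib_shift hk0 hk1]; exact ih.2

private lemma mem_iff {m l : ℕ} (hm : 1 < m) :
    (fib l % m = 0 ∧ fib (l+1) % m = 1) ↔
      ((fib l : ZMod m) = 0 ∧ (fib (l+1) : ZMod m) = 1) := by
  haveI : NeZero m := ⟨by omega⟩
  have key : ∀ a b : ℕ, b < m → ((a : ZMod m) = (b : ZMod m) ↔ a % m = b) := by
    intro a b hb
    rw [ZMod.natCast_eq_natCast_iff]
    unfold Nat.ModEq
    rw [Nat.mod_eq_of_lt hb]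
  constructor
  · rintro ⟨h0, h1⟩
    constructor
    · simpa using (key (fib l) 0 (by omega)).mpr h0
    · simpa using (key (fib (l+1)) 1 hm).mpr h1
  · rintro ⟨h0, h1⟩
    constructor
    · exact (key (fib l) 0 (by omega)).mp (by simpa using h0)
    · exact (key (fib (l+1)) 1 hm).mp (by simpa using h1)

private lemma kappa_dvd {m n : ℕ} (hm : 1 < m) (h0 : (fib n : ZMod m) = 0)
    (h1 : (fib (n+1) : ZMod m) = 1) : kappa m ∣ n := by
  rcases Nat.eq_zero_or_pos n with rfl | hn
  · exact dvd_zero _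
  have hnS : n ∈ {l : ℕ | 0 < l ∧ fib l % m = 0 ∧ fib (l + 1) % m = 1} :=
    ⟨hn, (mem_iff hm).mpr ⟨h0, h1⟩⟩
  rw [show kappa m = sInf {l : ℕ | 0 < l ∧ fib l % m = 0 ∧ fib (l + 1) % m = 1} from rfl]
  set k := sInf {l : ℕ | 0 < l ∧ fib l % m = 0 ∧ fib (l + 1) % m = 1} with hk
  have hkS := Nat.sInf_mem (Set.nonempty_of_mem hnS)
  rw [← hk] at hkS
  obtain ⟨hkpos, hkmod⟩ := hkS
  obtain ⟨hk0, hk1⟩ := (mem_iff hm).mp hkmod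
  have hper := period_of_dvd hk0 hk1 (Dvd.intro (n / k) rfl)
  have hr0 : (fib (n % k) : ZMod m) = 0 := by
    have := fib_shift hper.1 hper.2 (n % k)
    rw [show n % k + k * (n / k) = n from by
      have := Nat.mod_add_div n k; omega] at this
    rw [← this, h0]
  have hr1 : (fib (n % k + 1) : ZMod m) = 1 := by
    have := fib_shift hper.1 hper.2 (n % k + 1)
    rw [show n % k + 1 + k * (n / k) = n + 1 from by
      have := Nat.mod_add_div n k; omega] at this
    rw [← this, h1]
  by_contra hnd
  have hrpos : 0 < n % k := by
    rcases Nat.eq_zero_or_pos (n % k) with h | h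
    · exact absurd (Nat.dvd_of_mod_eq_zero h) hnd
    · exact h
  have hle : k ≤ n % k := Nat.sInf_le ⟨hrpos, (mem_iff hm).mpr ⟨hr0, hr1⟩⟩
  exact absurd hle (not_le.mpr (Nat.mod_lt n hkpos))

theorem kappa_prime_pow_dvd (p : ℕ) (hp : p.Prime) (hodd : p ≠ 2)
    (e : ℕ) (he : 1 ≤ e) (l : ℕ) (hl : kappa p ∣ l)
    (hdvd : p ^ e ∣ Nat.fib l) :
    kappa (p ^ e) ∣ l := by
  have hp1 : 1 < p := hp.one_lt
  have hm : 1 < p ^ e := Nat.one_lt_pow (by omega) hp1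
  haveI : NeZero (p ^ e) := ⟨by omega⟩
  haveI : NeZero p := ⟨by omega⟩
  rcases Nat.eq_zero_or_pos l with rfl | hlpos
  · exact dvd_zero _
  -- kappa p is a genuine period for p
  have hne : {l : ℕ | 0 < l ∧ fib l % p = 0 ∧ fib (l + 1) % p = 1}.Nonempty := by
    by_contra h
    rw [Set.not_nonempty_iff_eq_empty] at h
    have h0 : kappa p = 0 := by rw [kappa, h, Nat.sInf_empty]
    rw [h0] at hl
    omega
  have hkS := Nat.sInf_mem hne
  obtain ⟨hk0p, hk1p⟩ := (mem_iff hp1).mp hkS.2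
  obtain ⟨hl0p, hl1p⟩ := period_of_dvd hk0p hk1p hl
  obtain ⟨j, rfl⟩ : ∃ j, l = j + 1 := ⟨l - 1, by omega⟩
  have hl1p' : (fib (j+2) : ZMod p) = 1 := hl1p
  have hcas := cassini' j
  have hfj : (fib j : ℤ) = (fib (j+2) : ℤ) - fib (j+1) := by
    have : fib (j+2) = fib j + fib (j+1) := fib_add_two
    push_cast [this]; ring
  rw [hfj] at hcas
  -- parity: j+1 must be even
  have hpar : ((1 : ZMod p)) = (-1 : ZMod p)^(j+1) := by
    have := congrArg (Int.cast : ℤ → ZMod p) hcas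
    push_cast at this
    rw [hl0p, hl1p'] at this
    simpa using this
  have heven : Even (j+1) := by
    by_contra hodd'
    have ho : Odd (j+1) := Nat.not_even_iff_odd.mp hodd'
    rw [ho.neg_one_pow] at hpar
    have h2 : ((2:ℕ) : ZMod p) = 0 := by push_cast; linear_combination hpar
    have : p ∣ 2 := (ZMod.natCast_eq_zero_iff _ _).mp h2
    exact hodd ((Nat.prime_dvd_prime_iff_eq hp Nat.prime_two).mp this)
  rw [heven.neg_one_pow] at hcas
  -- p^e divides (X-1)(X+1)
  have hYdvd : ((p:ℤ))^e ∣ (fib (j+1) : ℤ) := by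
    have : ((p^e : ℕ) : ℤ) ∣ ((fib (j+1) : ℕ) : ℤ) := Int.natCast_dvd_natCast.mpr hdvd
    push_cast at this
    exact this
  have hfac : ((fib (j+2) : ℤ) - 1) * ((fib (j+2) : ℤ) + 1)
      = (fib (j+1) : ℤ) * ((fib (j+2) : ℤ) + (fib (j+1) : ℤ)) := by linear_combination hcas
  have hdvd2 : ((p:ℤ))^e ∣ ((fib (j+2) : ℤ) - 1) * ((fib (j+2) : ℤ) + 1) := by
    rw [hfac]; exact Dvd.dvd.mul_right hYdvd _
  -- p divides X - 1 but not X + 1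
  have hpX : (p:ℤ) ∣ (fib (j+2) : ℤ) - 1 := by
    have hc : (((fib (j+2) : ℤ) - 1 : ℤ) : ZMod p) = 0 := by push_cast [hl1p']; ring
    exact (ZMod.intCast_zmod_eq_zero_iff_dvd _ _).mp hc
  have hnd : ¬ (p:ℤ) ∣ (fib (j+2) : ℤ) + 1 := by
    intro h
    have h2 : (p:ℤ) ∣ 2 := by
      have := dvd_sub h hpX
      simpa using this
    have : p ∣ 2 := by exact_mod_cast h2
    exact hodd ((Nat.prime_dvd_prime_iff_eq hp Nat.prime_two).mp this)
  have hcop : IsCoprime ((p:ℤ)^e) ((fib (j+2) : ℤ) + 1) :=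
    (((Nat.prime_iff_prime_int.mp hp).coprime_iff_not_dvd).mpr hnd).pow_left
  have hfin : ((p:ℤ))^e ∣ (fib (j+2) : ℤ) - 1 := hcop.dvd_of_dvd_mul_right hdvd2
  -- conclude in ZMod (p^e)
  have h1m : (fib (j+1+1) : ZMod (p^e)) = 1 := by
    have hc : (((fib (j+2) : ℤ) - 1 : ℤ) : ZMod (p^e)) = 0 := by
      rw [ZMod.intCast_zmod_eq_zero_iff_dvd]
      push_cast
      exact_mod_cast hfin
    push_cast at hc
    rw [show j+1+1 = j+2 from rfl]
    linear_combination hc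
  have h0m : (fib (j+1) : ZMod (p^e)) = 0 :=
    (ZMod.natCast_eq_zero_iff _ _).mpr hdvd
  exact kappa_dvd hm h0m h1m
end

section
/- Let p be prime and e ≥ 1 be maximal with p^e dividing F_{κ(p)}. Then κ(p^n) = κ(p) for n ≤ e, and κ(p^n) = κ(p)·p^{n−e} for n > e. -/
open Nat

namespace KP

def Mem (m l : ℕ) : Prop := 0 < l ∧ Nat.fib l % m = 0 ∧ Nat.fib (l + 1) % m = 1

lemma mem_iff {m l : ℕ} (hm : 2 ≤ m) :
    Mem m l ↔ 0 < l ∧ m ∣ Nat.fib l ∧ Nat.fib (l + 1) ≡ 1 [MOD m] := by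
  unfold Mem Nat.ModEq
  rw [Nat.dvd_iff_mod_eq_zero, Nat.mod_eq_of_lt (show 1 < m by omega)]

lemma kappa_eq (m : ℕ) : kappa m = sInf {l | Mem m l} := rfl

-- pigeonhole existence
lemma exists_mem {m : ℕ} (hm : 2 ≤ m) : ∃ l, Mem m l := by
  haveI : NeZero m := ⟨by omega⟩
  set f : ℕ → ZMod m × ZMod m := fun n => ((Nat.fib n : ZMod m), (Nat.fib (n+1) : ZMod m)) with hf
  obtain ⟨x, y, hxy, hfxy⟩ := Finite.exists_ne_map_eq_of_infinite f
  wlog hlt : x < y generalizing x y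
  · exact this y x hxy.symm hfxy.symm (by omega)
  obtain ⟨d, hd, rfl⟩ : ∃ d, 0 < d ∧ y = x + d := ⟨y - x, by omega, by omega⟩
  have key : ∀ x, f x = f (x + d) → f 0 = f (0 + d) := by
    intro x
    induction x with
    | zero => exact id
    | succ n ih =>
      intro h
      apply ih
      have h1 : (Nat.fib (n+1) : ZMod m) = (Nat.fib (n+1+d) : ZMod m) :=
        congrArg Prod.fst h
      have h2 : (Nat.fib (n+2) : ZMod m) = (Nat.fib (n+1+d+1) : ZMod m) :=
        congrArg Prod.snd h
      have e1 : (Nat.fib (n+2) : ZMod m) = (Nat.fib n : ZMod m) + (Nat.fib (n+1) : ZMod m) := by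
        rw [Nat.fib_add_two]; push_cast; ring
      have e2 : (Nat.fib (n+d+2) : ZMod m) = (Nat.fib (n+d) : ZMod m) + (Nat.fib (n+d+1) : ZMod m) := by
        rw [Nat.fib_add_two]; push_cast; ring
      have h1' : (Nat.fib (n+1) : ZMod m) = (Nat.fib (n+d+1) : ZMod m) := by
        rw [h1]; ring_nf
      have h2' : (Nat.fib (n+2) : ZMod m) = (Nat.fib (n+d+2) : ZMod m) := by
        rw [h2]; ring_nf
      have : (Nat.fib n : ZMod m) = (Nat.fib (n+d) : ZMod m) := by
        have := e1.symm.trans (h2'.trans e2)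
        rw [h1'] at this
        exact add_right_cancel this
      simp only [hf, Prod.mk.injEq]
      exact ⟨this, h1'⟩
  have h0 : f 0 = f (0 + d) := key x hfxy
  rw [zero_add] at h0
  refine ⟨d, by omega, ?_, ?_⟩
  · have : (Nat.fib d : ZMod m) = 0 := by
      have := (congrArg Prod.fst h0).symm
      simpa [hf] using this
    rw [← Nat.dvd_iff_mod_eq_zero]
    exact (ZMod.natCast_eq_zero_iff _ _).mp this
  · have : (Nat.fib (d + 1) : ZMod m) = ((1:ℕ) : ZMod m) := by
      have := (congrArg Prod.snd h0).symm
      simpa [hf] using this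
    have := (ZMod.natCast_eq_natCast_iff _ _ _).mp this
    unfold Nat.ModEq at this
    rwa [Nat.mod_eq_of_lt (show 1 < m by omega)] at this

lemma kappa_mem {m : ℕ} (hm : 2 ≤ m) : Mem m (kappa m) :=
  Nat.sInf_mem (exists_mem hm)

lemma kappa_pos {m : ℕ} (hm : 2 ≤ m) : 0 < kappa m := (kappa_mem hm).1

lemma kappa_le {m l : ℕ} (h : Mem m l) : kappa m ≤ l := Nat.sInf_le h

-- shift lemma
lemma shift {m l : ℕ} (hm : 2 ≤ m) (h : Mem m l) :
    ∀ n, Nat.fib (l + n) ≡ Nat.fib n [MOD m] ∧ Nat.fib (l + n + 1) ≡ Nat.fib (n + 1) [MOD m] := by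
  obtain ⟨-, h0, h1⟩ := (mem_iff hm).mp h
  intro n
  induction n with
  | zero =>
    constructor
    · simpa using (Nat.modEq_zero_iff_dvd.mpr h0)
    · simpa using h1
  | succ n ih =>
    refine ⟨ih.2, ?_⟩
    have : Nat.fib (l + n + 2) ≡ Nat.fib (n + 2) [MOD m] := by
      rw [Nat.fib_add_two, Nat.fib_add_two]
      exact ih.1.add ih.2
    simpa [show l + (n+1) + 1 = l + n + 2 by ring, show n + 1 + 1 = n + 2 by ring] using this
  
lemma mem_sub {m a b : ℕ} (hm : 2 ≤ m) (ha : Mem m a) (hb : Mem m b) (hab : a < b) :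
    Mem m (b - a) := by
  obtain ⟨s1, s2⟩ := shift hm ha (b - a)
  rw [show a + (b - a) = b by omega] at s1 s2
  obtain ⟨-, h0, h1⟩ := (mem_iff hm).mp hb
  refine (mem_iff hm).mpr ⟨by omega, ?_, ?_⟩
  · exact (Nat.modEq_zero_iff_dvd).mp (s1.symm.trans (Nat.modEq_zero_iff_dvd.mpr h0))
  · exact s2.symm.trans h1

lemma kappa_dvd_of_mem {m : ℕ} (hm : 2 ≤ m) : ∀ {l}, Mem m l → kappa m ∣ l := by
  intro l
  induction l using Nat.strong_induction_on with
  | _ l ih =>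
    intro h
    have hle : kappa m ≤ l := kappa_le h
    rcases eq_or_lt_of_le hle with heq | hlt
    · exact heq ▸ dvd_refl _
    · have h' : Mem m (l - kappa m) := mem_sub hm (kappa_mem hm) h hlt
      have hpos : 0 < kappa m := kappa_pos hm
      have : kappa m ∣ l - kappa m := ih _ (by omega) h'
      have := Nat.dvd_add this (dvd_refl (kappa m))
      rwa [Nat.sub_add_cancel (le_of_lt hlt)] at this

lemma kappa_dvd_kappa {m m' : ℕ} (hm : 2 ≤ m) (hm' : 2 ≤ m') (h : m ∣ m') :
    kappa m ∣ kappa m' := by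
  apply kappa_dvd_of_mem hm
  obtain ⟨p, d, o⟩ := (mem_iff hm').mp (kappa_mem hm')
  exact (mem_iff hm).mpr ⟨p, dvd_trans h d, o.of_dvd h⟩


-- Cassini's identity
lemma cassini (l : ℕ) :
    (Nat.fib (l+1) : ℤ)^2 - Nat.fib (l+1) * Nat.fib l - (Nat.fib l : ℤ)^2 = (-1)^l := by
  induction l with
  | zero => simp
  | succ n ih =>
    have h : (Nat.fib (n+2) : ℤ) = Nat.fib n + Nat.fib (n+1) := by
      rw [Nat.fib_add_two]; push_cast; ring
    rw [h, pow_succ]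
    linear_combination (-1 : ℤ) * ih

lemma fib_two_mul_int (k : ℕ) :
    (Nat.fib (2*k) : ℤ) = 2 * Nat.fib k * Nat.fib (k+1) - (Nat.fib k : ℤ)^2 := by
  have h := Nat.fib_two_mul k
  have hle : Nat.fib k ≤ 2 * Nat.fib (k+1) := by
    have := Nat.fib_le_fib_succ (n := k); omega
  zify [hle] at h
  rw [h]; ring

lemma fib_two_mul_add_one_int (k : ℕ) :
    (Nat.fib (2*k+1) : ℤ) = (Nat.fib (k+1) : ℤ)^2 + (Nat.fib k : ℤ)^2 := by
  have h := Nat.fib_two_mul_add_one k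
  zify at h
  rw [h]

-- the key expansion lemma
lemma key (k : ℕ) (hk : 1 ≤ k) : ∀ m : ℕ, 1 ≤ m →
    ∃ c d : ℤ,
      (Nat.fib (m*k) : ℤ) = m * Nat.fib k * (Nat.fib (k+1) : ℤ)^(m-1)
          - (m.choose 2) * (Nat.fib k : ℤ)^2 * (Nat.fib (k+1) : ℤ)^(m-2)
          + (Nat.fib k : ℤ)^3 * c
      ∧ (Nat.fib (m*k+1) : ℤ) = (Nat.fib (k+1) : ℤ)^m
          + (m.choose 2) * (Nat.fib k : ℤ)^2 * (Nat.fib (k+1) : ℤ)^(m-2)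
          + (Nat.fib k : ℤ)^3 * d := by
  set a : ℤ := (Nat.fib k : ℤ) with ha
  set b : ℤ := (Nat.fib (k+1) : ℤ) with hb
  have hrec : ∀ m : ℕ, 1 ≤ m →
      (Nat.fib ((m+1)*k) : ℤ) = Nat.fib (m*k) * (b - a) + Nat.fib (m*k+1) * a
      ∧ (Nat.fib ((m+1)*k+1) : ℤ) = Nat.fib (m*k) * a + Nat.fib (m*k+1) * b := by
    intro m hm
    have hk1 : k - 1 + 1 = k := by omega
    have hprev : (Nat.fib (k-1) : ℤ) = b - a := by
      have : Nat.fib (k-1+2) = Nat.fib (k-1) + Nat.fib (k-1+1) := Nat.fib_add_two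
      rw [hk1] at this
      rw [show k - 1 + 2 = k + 1 by omega] at this
      rw [ha, hb]; push_cast [this]; ring
    constructor
    · have h := Nat.fib_add (m*k) (k-1)
      rw [show m*k + (k-1) + 1 = (m+1)*k by rw [Nat.succ_mul]; omega, show k-1+1 = k from hk1] at h
      rw [h]; push_cast; rw [hprev, ← ha]; try ring
    · have h := Nat.fib_add (m*k) k
      rw [show m*k + k + 1 = (m+1)*k+1 by rw [Nat.succ_mul]] at h
      rw [h]; push_cast; rw [← ha, ← hb]; try ring
  intro m
  induction m with
  | zero => omega
  | succ n ih =>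
    intro _
    rcases Nat.eq_zero_or_pos n with rfl | hn
    · exact ⟨0, 0, by norm_num [ha, hb]⟩
    rcases eq_or_lt_of_le (show 1 ≤ n from hn) with rfl | hn2
    · -- m = 2 case
      refine ⟨0, 0, ?_, ?_⟩
      · rw [show (1+1)*k = 2*k by ring, fib_two_mul_int k]
        push_cast [← ha, ← hb]
        norm_num
        try ring
      · rw [show (1+1)*k+1 = 2*k+1 by ring, fib_two_mul_add_one_int k]
        push_cast [← ha, ← hb]
        norm_num
        try ring
    · -- n ≥ 2
      obtain ⟨c, d, h1, h2⟩ := ih hn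
      obtain ⟨r1, r2⟩ := hrec n hn
      obtain ⟨j, rfl⟩ : ∃ j, n = j + 2 := ⟨n - 2, by omega⟩
      have e1 : j + 2 - 1 = j + 1 := by omega
      have e2 : j + 2 - 2 = j := by omega
      have e3 : j + 2 + 1 - 1 = j + 2 := by omega
      have e4 : j + 2 + 1 - 2 = j + 1 := by omega
      have echoose : ((j+3).choose 2 : ℤ) = ((j+2).choose 2 : ℤ) + (j + 2 : ℤ) := by
        have h3 : (j+3).choose 2 = (j+2).choose 1 + (j+2).choose 2 := Nat.choose_succ_succ (j+2) 1
        push_cast [h3, Nat.choose_one_right]; ring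
      simp only [e1, e2] at h1 h2
      refine ⟨c * b + 2 * ((j+2).choose 2 : ℤ) * b^j - a * c + a * d,
              a * c + d * b - ((j+2).choose 2 : ℤ) * b^j, ?_, ?_⟩
      · rw [r1, h1, h2]
        simp only [e3, e4, show j + 2 + 1 = j + 3 by omega]
        push_cast [echoose]
        ring
      · rw [r2, h1, h2]
        simp only [e3, e4, show j + 2 + 1 = j + 3 by omega]
        push_cast [echoose]
        ring


lemma mem_iff_int {m l : ℕ} (hm : 2 ≤ m) :
    Mem m l ↔ 0 < l ∧ (m:ℤ) ∣ (Nat.fib l : ℤ) ∧ (m:ℤ) ∣ ((Nat.fib (l+1) : ℤ) - 1) := by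
  rw [mem_iff hm]
  refine and_congr Iff.rfl (and_congr ?_ ?_)
  · exact_mod_cast Int.natCast_dvd_natCast.symm
  · have hfib : 1 ≤ Nat.fib (l+1) := Nat.fib_pos.mpr (by omega)
    rw [Nat.ModEq.comm, Nat.modEq_iff_dvd' hfib]
    constructor
    · intro h
      have h2 : ((m:ℤ)) ∣ ((Nat.fib (l+1) - 1 : ℕ) : ℤ) := by exact_mod_cast h
      rwa [Nat.cast_sub hfib] at h2
    · intro h
      have h2 : ((m:ℤ)) ∣ ((Nat.fib (l+1) - 1 : ℕ) : ℤ) := by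
        rwa [Nat.cast_sub hfib]
      exact_mod_cast h2

lemma pow_lift {p : ℕ} (hp : p.Prime) {b : ℤ} {n : ℕ} (hn : 1 ≤ n)
    (h : (p:ℤ)^n ∣ b - 1) : (p:ℤ)^(n+1) ∣ b^p - 1 := by
  have hgeom : (∑ i ∈ Finset.range p, b ^ i) * (b - 1) = b ^ p - 1 := geom_sum_mul b p
  have hpb : (p:ℤ) ∣ b - 1 := dvd_trans (dvd_pow_self _ (by omega)) h
  have hsum : (p:ℤ) ∣ (∑ i ∈ Finset.range p, b ^ i) := by
    have h1 : (p:ℤ) ∣ (∑ i ∈ Finset.range p, b ^ i) - p := by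
      have he : (∑ i ∈ Finset.range p, b ^ i) - p = ∑ i ∈ Finset.range p, (b ^ i - 1) := by
        rw [Finset.sum_sub_distrib]
        simp
      rw [he]
      apply Finset.dvd_sum
      intro i _
      have : (b - 1) ∣ b ^ i - 1 := by
        simpa using sub_dvd_pow_sub_pow b 1 i
      exact dvd_trans hpb this
    have := dvd_add h1 (dvd_refl (p:ℤ))
    simpa using this
  calc (p:ℤ)^(n+1) = (p:ℤ)^n * (p:ℤ) := by ring
  _ ∣ (b - 1) * (∑ i ∈ Finset.range p, b ^ i) := mul_dvd_mul h hsum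
  _ = b ^ p - 1 := by rw [mul_comm]; exact hgeom

lemma two_le_pp {p n : ℕ} (hp : p.Prime) (hn : 1 ≤ n) : 2 ≤ p ^ n :=
  le_trans hp.two_le (Nat.le_self_pow (by omega) p)

lemma step_dvd {p n : ℕ} (hp : p.Prime) (hn : 1 ≤ n) :
    kappa (p^(n+1)) ∣ p * kappa (p^n) := by
  have hm : 2 ≤ p ^ n := two_le_pp hp hn
  have hm' : 2 ≤ p ^ (n+1) := two_le_pp hp (by omega)
  set t := kappa (p^n) with ht
  obtain ⟨htpos, ha, hb⟩ := (mem_iff_int hm).mp (kappa_mem hm)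
  obtain ⟨c, d, h1, h2⟩ := key t htpos p hp.one_le
  push_cast at ha hb
  obtain ⟨u, hu⟩ := ha
  have d1 : (p:ℤ)^(n+1) ∣ (p:ℤ) * (Nat.fib t : ℤ) := by
    rw [hu, pow_succ]
    exact ⟨u, by ring⟩
  have d2 : (p:ℤ)^(n+1) ∣ ((Nat.fib t : ℤ))^2 := by
    refine dvd_trans (pow_dvd_pow _ (by omega : n + 1 ≤ 2*n)) ?_
    rw [hu]
    exact ⟨u^2, by ring⟩
  have d3 : (p:ℤ)^(n+1) ∣ ((Nat.fib t : ℤ))^3 := by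
    refine dvd_trans (pow_dvd_pow _ (by omega : n + 1 ≤ 3*n)) ?_
    rw [hu]
    exact ⟨u^3, by ring⟩
  apply kappa_dvd_of_mem hm'
  refine (mem_iff_int hm').mpr ⟨Nat.mul_pos hp.pos htpos, ?_, ?_⟩
  · push_cast
    rw [h1]
    refine dvd_add (dvd_sub ?_ ?_) ?_
    · exact Dvd.dvd.mul_right d1 _
    · exact Dvd.dvd.mul_right (Dvd.dvd.mul_left d2 _) _
    · exact Dvd.dvd.mul_right d3 _
  · push_cast
    rw [h2]
    have hbp : (p:ℤ)^(n+1) ∣ (Nat.fib (t+1) : ℤ)^p - 1 := pow_lift hp hn hb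
    have he : (Nat.fib (t+1) : ℤ)^p + (p.choose 2 : ℤ) * (Nat.fib t:ℤ)^2 * (Nat.fib (t+1):ℤ)^(p-2)
        + (Nat.fib t:ℤ)^3 * d - 1
        = ((Nat.fib (t+1) : ℤ)^p - 1) + ((p.choose 2 : ℤ) * (Nat.fib t:ℤ)^2 * (Nat.fib (t+1):ℤ)^(p-2)
        + (Nat.fib t:ℤ)^3 * d) := by ring
    rw [he]
    refine dvd_add hbp (dvd_add ?_ ?_)
    · exact Dvd.dvd.mul_right (Dvd.dvd.mul_left d2 _) _
    · exact Dvd.dvd.mul_right d3 _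

lemma step_cases {p n : ℕ} (hp : p.Prime) (hn : 1 ≤ n) :
    kappa (p^(n+1)) = kappa (p^n) ∨ kappa (p^(n+1)) = p * kappa (p^n) := by
  have hm : 2 ≤ p ^ n := two_le_pp hp hn
  have hm' : 2 ≤ p ^ (n+1) := two_le_pp hp (by omega)
  have h1 : kappa (p^n) ∣ kappa (p^(n+1)) :=
    kappa_dvd_kappa hm hm' (pow_dvd_pow _ (by omega))
  have h2 := step_dvd hp hn
  obtain ⟨d, hd⟩ := h1
  have htpos : 0 < kappa (p^n) := kappa_pos hm
  have hdp : d ∣ p := by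
    rw [hd] at h2
    exact (Nat.mul_dvd_mul_iff_left htpos).mp (by rwa [mul_comm p] at h2)
  rcases (Nat.Prime.eq_one_or_self_of_dvd hp d hdp) with rfl | rfl
  · left; rw [hd]; ring
  · right; rw [hd]; ring

lemma step_ne {p n : ℕ} (hp : p.Prime) (hn : 1 ≤ n)
    (h : ¬ Mem (p^(n+1)) (kappa (p^n))) :
    kappa (p^(n+1)) = p * kappa (p^n) := by
  rcases step_cases hp hn with heq | heq
  · exact absurd (heq ▸ kappa_mem (two_le_pp hp (by omega))) h
  · exact heq


lemma mem_pow_of_dvd {p e : ℕ} (hp : p.Prime) (hodd : Odd p) (he : 1 ≤ e)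
    (hdvd : p ^ e ∣ Nat.fib (kappa p)) : Mem (p^e) (kappa p) := by
  have hp2 : 2 ≤ p := hp.two_le
  have hpZ : Prime ((p:ℤ)) := Nat.prime_iff_prime_int.mp hp
  obtain ⟨hpos, hpa, hpb⟩ := (mem_iff_int hp2).mp (kappa_mem hp2)
  set l := kappa p with hl
  set a : ℤ := (Nat.fib l : ℤ) with ha
  set b : ℤ := (Nat.fib (l+1) : ℤ) with hb
  have hcas : b^2 - b * a - a^2 = (-1)^l := cassini l
  have hpodd : ¬ ((p:ℤ) ∣ 2) := by
    intro h
    have h2 : (p:ℕ) ∣ 2 := by exact_mod_cast h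
    have := Nat.le_of_dvd (by norm_num) h2
    have hp2' : p = 2 := by omega
    rw [hp2'] at hodd
    exact (by decide : ¬ Odd 2) hodd
  have hsign : ((-1 : ℤ))^l = 1 := by
    rcases Nat.even_or_odd l with hev | hod
    · exact Even.neg_one_pow hev
    · exfalso
      rw [Odd.neg_one_pow hod] at hcas
      have hcomb : (2:ℤ) = -((b-1)*(b+1)) + a*(b+a) := by linear_combination hcas
      apply hpodd
      rw [hcomb]
      exact dvd_add (dvd_neg.mpr (hpb.mul_right _)) (hpa.mul_right _)
  rw [hsign] at hcas
  have hfact : (b-1)*(b+1) = a*(a+b) := by linear_combination hcas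
  have hea : ((p:ℤ))^e ∣ a := by rw [ha]; exact_mod_cast hdvd
  have hnb1 : ¬ ((p:ℤ) ∣ b + 1) := by
    intro h
    apply hpodd
    have : (2:ℤ) = (b+1) - (b-1) := by ring
    rw [this]
    exact dvd_sub h hpb
  have hcop : IsCoprime ((p:ℤ)^e) (b+1) :=
    ((hpZ.coprime_iff_not_dvd).mpr hnb1).pow_left
  have hd1 : ((p:ℤ))^e ∣ (b-1)*(b+1) := by
    rw [hfact]
    exact hea.mul_right _
  have hb1 : ((p:ℤ))^e ∣ b - 1 := hcop.dvd_of_dvd_mul_right hd1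
  exact (mem_iff_int (two_le_pp hp he)).mpr ⟨hpos, by exact_mod_cast hdvd, by push_cast; exact hb1⟩

lemma kappa_pow_eq_of_le {p e : ℕ} (hp : p.Prime) (hodd : Odd p) (he : 1 ≤ e)
    (hdvd : p ^ e ∣ Nat.fib (kappa p)) {n : ℕ} (h1 : 1 ≤ n) (hne : n ≤ e) :
    kappa (p^n) = kappa p := by
  have hp2 : 2 ≤ p := hp.two_le
  have hE : kappa (p^e) = kappa p :=
    Nat.dvd_antisymm (kappa_dvd_of_mem (two_le_pp hp he) (mem_pow_of_dvd hp hodd he hdvd))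
      (kappa_dvd_kappa hp2 (two_le_pp hp he) (dvd_pow_self p (by omega)))
  have d1 : kappa p ∣ kappa (p^n) :=
    kappa_dvd_kappa hp2 (two_le_pp hp h1) (dvd_pow_self p (by omega))
  have d2 : kappa (p^n) ∣ kappa (p^e) :=
    kappa_dvd_kappa (two_le_pp hp h1) (two_le_pp hp he) (pow_dvd_pow p hne)
  rw [hE] at d2
  exact Nat.dvd_antisymm d2 d1

lemma odd_main {p : ℕ} (hp : p.Prime) (hodd : Odd p) {e : ℕ} (he : 1 ≤ e)
    (hdvd : p ^ e ∣ Nat.fib (kappa p)) (hndvd : ¬ p ^ (e + 1) ∣ Nat.fib (kappa p)) :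
    ∀ n, e ≤ n → kappa (p^n) = kappa p * p^(n-e) ∧
      ¬ ((p:ℤ)^(n+1) ∣ (Nat.fib (kappa (p^n)) : ℤ)) := by
  have hp2 : 2 ≤ p := hp.two_le
  have hp3 : 3 ≤ p := by
    rcases hp.eq_two_or_odd' with rfl | _
    · exact absurd hodd (by decide)
    · have hmod := Nat.odd_iff.mp hodd
      omega
  have hpZ : Prime ((p:ℤ)) := Nat.prime_iff_prime_int.mp hp
  have hpZ0 : ((p:ℤ)) ≠ 0 := by positivity
  intro n hn
  induction n, hn using Nat.le_induction with
  | base =>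
    have hE : kappa (p^e) = kappa p := kappa_pow_eq_of_le hp hodd he hdvd he le_rfl
    refine ⟨by rw [hE]; simp, ?_⟩
    rw [hE]
    intro hcon
    exact hndvd (by exact_mod_cast hcon)
  | succ n hen ih =>
    have hn1 : 1 ≤ n := le_trans he hen
    obtain ⟨ihk, ihx⟩ := ih
    set t := kappa (p^n) with ht
    obtain ⟨htpos, hpa, hpb⟩ := (mem_iff_int (two_le_pp hp hn1)).mp (kappa_mem (two_le_pp hp hn1))
    push_cast at hpa hpb
    have hnotmem : ¬ Mem (p^(n+1)) t := by
      intro hM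
      obtain ⟨-, hM1, -⟩ := (mem_iff_int (two_le_pp hp (by omega))).mp hM
      push_cast at hM1
      exact ihx hM1
    have heq : kappa (p^(n+1)) = p * t := step_ne hp hn1 hnotmem
    obtain ⟨u, hu⟩ := hpa
    have hu' : ¬ ((p:ℤ) ∣ u) := by
      intro h
      apply ihx
      obtain ⟨v, hv⟩ := h
      rw [hu, hv, pow_succ]
      exact ⟨v, by ring⟩
    have hpb1 : (p:ℤ) ∣ (Nat.fib (t+1) : ℤ) - 1 :=
      dvd_trans (dvd_pow_self _ (by omega)) hpb
    constructor
    · rw [heq, ihk, show n + 1 - e = (n - e) + 1 by omega, pow_succ]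
      ring
    · rw [heq]
      intro hcon
      obtain ⟨c, d, h1, -⟩ := key t htpos p hp.one_le
      rw [h1] at hcon
      have pchoose : (p:ℤ) ∣ (p.choose 2 : ℤ) := by
        exact_mod_cast Nat.Prime.dvd_choose_self hp (by norm_num) (by omega)
      obtain ⟨w, hw⟩ := pchoose
      have t2 : ((p:ℤ))^(n+2) ∣ (p.choose 2 : ℤ) * (Nat.fib t:ℤ)^2 * (Nat.fib (t+1):ℤ)^(p-2) := by
        rw [hw, hu]
        refine dvd_mul_of_dvd_left ?_ _
        have : ((p:ℤ))^(n+2) ∣ ((p:ℤ))^(2*n+1) := pow_dvd_pow _ (by omega)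
        refine dvd_trans this ⟨w * u^2, by ring⟩
      have t3 : ((p:ℤ))^(n+2) ∣ (Nat.fib t:ℤ)^3 * c := by
        rw [hu]
        have : ((p:ℤ))^(n+2) ∣ ((p:ℤ))^(3*n) := pow_dvd_pow _ (by omega)
        refine dvd_trans this ⟨u^3 * c, by ring⟩
      have tP1 : ((p:ℤ))^(n+2) ∣ (p:ℤ) * (Nat.fib t:ℤ) * (Nat.fib (t+1):ℤ)^(p-1) := by
        have hx : (p:ℤ) * (Nat.fib t:ℤ) * (Nat.fib (t+1):ℤ)^(p-1)
            = ((p:ℤ) * (Nat.fib t:ℤ) * (Nat.fib (t+1):ℤ)^(p-1)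
              - (p.choose 2 : ℤ) * (Nat.fib t:ℤ)^2 * (Nat.fib (t+1):ℤ)^(p-2)
              + (Nat.fib t:ℤ)^3 * c)
              + (p.choose 2 : ℤ) * (Nat.fib t:ℤ)^2 * (Nat.fib (t+1):ℤ)^(p-2)
              - (Nat.fib t:ℤ)^3 * c := by ring
        rw [hx]
        exact dvd_sub (dvd_add hcon t2) t3
      rw [hu] at tP1
      have hP1 : (p:ℤ) * ((p:ℤ)^n * u) * (Nat.fib (t+1):ℤ)^(p-1)
          = ((p:ℤ))^(n+1) * (u * (Nat.fib (t+1):ℤ)^(p-1)) := by ring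
      rw [hP1] at tP1
      have hpow : ((p:ℤ))^(n+2) = ((p:ℤ))^(n+1) * (p:ℤ) := by ring
      rw [hpow] at tP1
      have hcancel : (p:ℤ) ∣ u * (Nat.fib (t+1):ℤ)^(p-1) :=
        (mul_dvd_mul_iff_left (pow_ne_zero (n+1) hpZ0)).mp tP1
      rcases hpZ.dvd_mul.mp hcancel with h | h
      · exact hu' h
      · have hb : (p:ℤ) ∣ (Nat.fib (t+1):ℤ) := hpZ.dvd_of_dvd_pow h
        have : (p:ℤ) ∣ 1 := by
          have h1' : (1:ℤ) = (Nat.fib (t+1):ℤ) - ((Nat.fib (t+1):ℤ) - 1) := by ring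
          rw [h1']
          exact dvd_sub hb hpb1
        exact hpZ.not_dvd_one this


lemma kappa_two : kappa 2 = 3 := by
  have h3 : Mem 2 3 := by
    refine ⟨by norm_num, ?_, ?_⟩ <;> decide
  have hle : kappa 2 ≤ 3 := kappa_le h3
  have hpos : 0 < kappa 2 := kappa_pos (by norm_num)
  have hmem : Mem 2 (kappa 2) := kappa_mem (by norm_num)
  interval_cases h : (kappa 2)
  · exact absurd hmem.2.1 (by decide)
  · exact absurd hmem.2.1 (by decide)
  · rfl

lemma kappa_four : kappa (2^2) = 6 := by
  have h := step_cases (p := 2) (n := 1) Nat.prime_two le_rfl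
  rw [pow_one, kappa_two] at h
  rcases h with h | h
  · exfalso
    have hmem : Mem (2^2) (kappa (2^2)) := kappa_mem (by norm_num)
    rw [h] at hmem
    exact absurd hmem.2.1 (by decide)
  · rw [h]

lemma two_main : ∀ n, 2 ≤ n → kappa (2^n) = 3 * 2^(n-1) ∧
    ((2:ℤ)^(n+1) ∣ (Nat.fib (kappa (2^n)) : ℤ)) ∧
    ¬ ((2:ℤ)^(n+2) ∣ (Nat.fib (kappa (2^n)) : ℤ)) := by
  intro n hn
  induction n, hn using Nat.le_induction with
  | base =>
    refine ⟨by rw [kappa_four]; norm_num, ?_, ?_⟩ <;>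
      rw [kappa_four, show Nat.fib 6 = 8 from by decide] <;> norm_num
  | succ n hn ih =>
    obtain ⟨ihk, ihd, ihx⟩ := ih
    have h2n : 2 ≤ 2^n := two_le_pp Nat.prime_two (by omega)
    set t := kappa (2^n) with ht
    obtain ⟨htpos, -, hpb⟩ := (mem_iff_int h2n).mp (kappa_mem h2n)
    push_cast at hpb
    set a : ℤ := (Nat.fib t : ℤ) with ha
    set b : ℤ := (Nat.fib (t+1) : ℤ) with hb
    have hb2 : (2:ℤ) ∣ b - 1 := dvd_trans (dvd_pow_self _ (by omega)) hpb
    have hbodd : ¬ ((2:ℤ) ∣ b) := by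
      intro h
      obtain ⟨x, hx⟩ := hb2
      obtain ⟨y, hy⟩ := h
      omega
    have heven : Even t := by
      rw [ihk, show n - 1 = (n-2)+1 by omega, pow_succ]
      exact ⟨3 * 2^(n-2), by ring⟩
    have hcas : b^2 - b * a - a^2 = (-1)^t := cassini t
    rw [Even.neg_one_pow heven] at hcas
    have hfact : (b-1)*(b+1) = a*(a+b) := by linear_combination hcas
    obtain ⟨u, hu⟩ := ihd
    have hu' : ¬ ((2:ℤ) ∣ u) := by
      intro h
      apply ihx
      obtain ⟨v, hv⟩ := h
      rw [hu, hv, pow_succ]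
      exact ⟨v, by ring⟩
    have haeven : (2:ℤ) ∣ a := by
      rw [hu]
      exact Dvd.dvd.mul_right (dvd_pow_self _ (by omega)) u
    have habodd : ¬ ((2:ℤ) ∣ a + b) := by
      intro h
      apply hbodd
      have : b = (a + b) - a := by ring
      rw [this]
      exact dvd_sub h haeven
    have hnotmem : ¬ Mem (2^(n+1)) t := by
      intro hM
      obtain ⟨-, -, hM2⟩ := (mem_iff_int (two_le_pp Nat.prime_two (by omega))).mp hM
      push_cast at hM2
      rw [← hb] at hM2
      -- 2^(n+2) ∣ (b-1)(b+1) = a(a+b), a+b odd ⇒ 2^(n+2) ∣ a, contra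
      obtain ⟨x, hx⟩ := hM2
      have hbp1 : (2:ℤ) ∣ b + 1 := by
        obtain ⟨y, hy⟩ := hb2
        exact ⟨y + 1, by omega⟩
      obtain ⟨y, hy⟩ := hbp1
      have hprod : ((2:ℤ))^(n+2) ∣ a * (a + b) := by
        rw [← hfact, hx, hy, show ((2:ℤ))^(n+2) = 2^(n+1)*2 by ring]
        exact ⟨x * y, by ring⟩
      have hcop : IsCoprime ((2:ℤ)^(n+2)) (a+b) :=
        (((Nat.prime_iff_prime_int.mp Nat.prime_two).coprime_iff_not_dvd).mpr habodd).pow_left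
      exact ihx (hcop.dvd_of_dvd_mul_right hprod)
    have heq : kappa (2^(n+1)) = 2 * t := step_ne Nat.prime_two (by omega) hnotmem
    have hfib2t : (Nat.fib (2*t) : ℤ) = a * (2 * b - a) := by
      rw [fib_two_mul_int t, ← ha, ← hb]
      ring
    have hw : (Nat.fib (2*t) : ℤ) = 2^(n+2) * (u * (b - 2^n * u)) := by
      rw [hfib2t, hu, show ((2:ℤ))^(n+1) = 2^n * 2 by ring]
      ring
    have hwodd : ¬ ((2:ℤ) ∣ u * (b - 2^n * u)) := by
      intro h
      rcases (Nat.prime_iff_prime_int.mp Nat.prime_two).dvd_mul.mp h with h | h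
      · exact hu' h
      · apply hbodd
        have hd : (2:ℤ) ∣ (2:ℤ)^n * u := Dvd.dvd.mul_right (dvd_pow_self _ (by omega)) u
        have : b = (b - 2^n * u) + 2^n * u := by ring
        rw [this]
        exact dvd_add h hd
    refine ⟨?_, ?_, ?_⟩
    · rw [heq, ihk, show n + 1 - 1 = (n-1) + 1 by omega, pow_succ]
      ring
    · rw [heq, hw]
      exact Dvd.intro _ rfl
    · rw [heq, hw]
      intro hcon
      rw [show ((2:ℤ))^(n+1+2) = 2^(n+2) * 2 by ring] at hcon
      exact hwodd ((mul_dvd_mul_iff_left (a := ((2:ℤ))^(n+2)) (by positivity)).mp hcon)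

end KP

theorem kappa_prime_pow (p : ℕ) (hp : p.Prime) (e : ℕ) (he : 1 ≤ e)
    (hdvd : p ^ e ∣ Nat.fib (kappa p)) (hndvd : ¬ p ^ (e + 1) ∣ Nat.fib (kappa p)) :
    ∀ n : ℕ, 1 ≤ n →
      (n ≤ e → kappa (p ^ n) = kappa p) ∧
      (e < n → kappa (p ^ n) = kappa p * p ^ (n - e)) := by
  intro n hn
  rcases hp.eq_two_or_odd' with rfl | hodd
  · -- p = 2 : here e = 1 necessarily
    have hk2 : kappa 2 = 3 := KP.kappa_two
    have hf3 : Nat.fib (kappa 2) = 2 := by rw [hk2]; decide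
    have he1 : e = 1 := by
      rw [hf3] at hdvd
      have h1 : 2^e ≤ 2 := Nat.le_of_dvd (by norm_num) hdvd
      by_contra h
      have h2 : 2 ≤ e := by omega
      have := Nat.pow_le_pow_right (show 1 ≤ 2 by norm_num) h2
      omega
    subst he1
    constructor
    · intro hne
      have : n = 1 := by omega
      rw [this, pow_one]
    · intro hgt
      have := (KP.two_main n (by omega)).1
      rw [this, hk2]
  · constructor
    · intro hne
      exact KP.kappa_pow_eq_of_le hp hodd he hdvd hn hne
    · intro hgt
      exact (KP.odd_main hp hodd he hdvd hndvd n (by omega)).1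
end

section
/- Let p ≠ 2, 5 be a prime with p ≡ ±1 (mod 5). Then p² divides F_{κ(p)} if and only if p² divides F_{p−1}. -/
private lemma fib_closed {p : ℕ} [Fact p.Prime] (r : ZMod p) (hr : r * r = 5) :
    ∀ n : ℕ, (Nat.fib n : ZMod p) * (2 ^ n * r) = (1 + r) ^ n - (1 - r) ^ n := by
  intro n
  induction n using Nat.twoStepInduction with
  | zero => simp
  | one => simp [Nat.fib_one]; ring
  | more n ih1 ih2 =>
    rw [Nat.fib_add_two]
    push_cast
    linear_combination (4 : ZMod p) * ih1 + 2 * ih2 - ((1+r)^n - (1-r)^n) * hr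

private lemma five_is_square {p : ℕ} [hp : Fact p.Prime] (h2 : p ≠ 2) (h5 : p ≠ 5)
    (hmod : p % 5 = 1 ∨ p % 5 = 4) : ∃ r : ZMod p, r * r = 5 := by
  haveI h5p : Fact (Nat.Prime 5) := ⟨by norm_num⟩
  have h5ne : ((5 : ℕ) : ZMod p) ≠ 0 := by
    rw [Ne, ZMod.natCast_eq_zero_iff]
    intro h
    exact h5 ((Nat.prime_dvd_prime_iff_eq hp.out (by norm_num)).mp h)
  have hpne : ((p : ℕ) : ZMod 5) ≠ 0 := by
    rw [Ne, ZMod.natCast_eq_zero_iff]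
    intro h
    omega
  have hsq : IsSquare ((p : ℕ) : ZMod 5) := by
    rw [← ZMod.natCast_mod]
    rcases hmod with h | h
    · rw [h]; exact ⟨1, by norm_num⟩
    · rw [h]; exact ⟨2, by norm_num⟩
  have h1 : legendreSym 5 p = 1 := (legendreSym.eq_one_iff' 5 hpne).mpr hsq
  have h2' : legendreSym p 5 = legendreSym 5 p :=
    legendreSym.quadratic_reciprocity_one_mod_four (by norm_num) h2
  have : IsSquare ((5 : ℕ) : ZMod p) :=
    (legendreSym.eq_one_iff' p h5ne).mp (h2'.trans h1)
  obtain ⟨r, hr⟩ := this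
  exact ⟨r, by push_cast at hr; rw [← hr]⟩

private lemma fib_p_entry {p : ℕ} [hp : Fact p.Prime] (h2 : p ≠ 2) (h5 : p ≠ 5)
    (hmod : p % 5 = 1 ∨ p % 5 = 4) :
    Nat.fib (p - 1) % p = 0 ∧ Nat.fib p % p = 1 := by
  obtain ⟨r, hr⟩ := five_is_square h2 h5 hmod
  have hpne2 : ((2:ℕ) : ZMod p) ≠ 0 := by
    rw [Ne, ZMod.natCast_eq_zero_iff]
    intro h
    exact h2 ((Nat.prime_dvd_prime_iff_eq hp.out (by norm_num)).mp h)
  have h2z : (2 : ZMod p) ≠ 0 := by exact_mod_cast hpne2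
  have hrne : r ≠ 0 := by
    intro h
    have : ((5:ℕ) : ZMod p) = 0 := by rw [h] at hr; push_cast; rw [← hr]; ring
    rw [ZMod.natCast_eq_zero_iff] at this
    exact h5 ((Nat.prime_dvd_prime_iff_eq hp.out (by norm_num)).mp this)
  have hab : (1 + r) * (1 - r) = -4 := by linear_combination -hr
  have hane : (1 + r) ≠ 0 := by
    intro h
    have : (-4 : ZMod p) = 0 := by rw [← hab, h, zero_mul]
    have : (4 : ZMod p) = 0 := by linear_combination -this
    have : (2 : ZMod p) * 2 = 0 := by linear_combination this
    rcases mul_eq_zero.mp this with h' | h' <;> exact h2z h'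
  have hbne : (1 - r) ≠ 0 := by
    intro h
    have : (-4 : ZMod p) = 0 := by rw [← hab, h, mul_zero]
    have : (2 : ZMod p) * 2 = 0 := by linear_combination -this
    rcases mul_eq_zero.mp this with h' | h' <;> exact h2z h'
  constructor
  · have hc := fib_closed r hr (p - 1)
    rw [ZMod.pow_card_sub_one_eq_one hane, ZMod.pow_card_sub_one_eq_one hbne,
      sub_self] at hc
    have h2r : (2 : ZMod p) ^ (p-1) * r ≠ 0 := mul_ne_zero (pow_ne_zero _ h2z) hrne
    have hz : (Nat.fib (p-1) : ZMod p) = 0 := by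
      rcases mul_eq_zero.mp hc with h | h
      · exact h
      · exact absurd h h2r
    rw [ZMod.natCast_eq_zero_iff] at hz
    exact (Nat.dvd_iff_mod_eq_zero).mp hz
  · have hc := fib_closed r hr p
    rw [ZMod.pow_card, ZMod.pow_card, ZMod.pow_card] at hc
    have : ((Nat.fib p : ZMod p) - 1) * (2 * r) = 0 := by linear_combination hc
    have hfp : (Nat.fib p : ZMod p) = ((1:ℕ) : ZMod p) := by
      rcases mul_eq_zero.mp this with h | h
      · push_cast; linear_combination h
      · exact absurd h (mul_ne_zero h2z hrne)
    have := (ZMod.natCast_eq_natCast_iff _ _ _).mp hfp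
    unfold Nat.ModEq at this
    rwa [Nat.one_mod_eq_one.mpr hp.out.ne_one] at this

private lemma fib_period {N a : ℕ} (h0 : (Nat.fib a : ZMod N) = 0)
    (h1 : (Nat.fib (a + 1) : ZMod N) = 1) (n : ℕ) :
    (Nat.fib (n + a) : ZMod N) = Nat.fib n := by
  cases n with
  | zero => simpa using h0
  | succ n =>
    have e : n + 1 + a = a + n + 1 := by omega
    rw [e, Nat.fib_add]
    push_cast
    rw [h0, h1]
    ring

private lemma fib_period_mul {N a : ℕ} (h0 : (Nat.fib a : ZMod N) = 0)
    (h1 : (Nat.fib (a + 1) : ZMod N) = 1) (q n : ℕ) :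
    (Nat.fib (n + q * a) : ZMod N) = Nat.fib n := by
  induction q with
  | zero => simp
  | succ q ih =>
    have e : n + (q + 1) * a = (n + q * a) + a := by ring
    rw [e, fib_period h0 h1, ih]

private lemma fib_mul_entry {p k : ℕ} (hk : 0 < k) (hdvd : p ∣ Nat.fib k) (m : ℕ) :
    (Nat.fib ((m+1)*k) : ZMod (p^2))
        = (m+1) * (Nat.fib k : ZMod (p^2)) * (Nat.fib (k+1) : ZMod (p^2))^m ∧
      (Nat.fib ((m+1)*k + 1) : ZMod (p^2)) = (Nat.fib (k+1) : ZMod (p^2))^(m+1) := by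
  have hpp : ((p : ZMod (p^2)) * p) = 0 := by
    have := (ZMod.natCast_eq_zero_iff (p*p) (p^2)).mpr (by rw [pow_two])
    push_cast at this
    exact this
  obtain ⟨t, ht⟩ := hdvd
  have hFF : (Nat.fib k : ZMod (p^2)) * (Nat.fib k : ZMod (p^2)) = 0 := by
    rw [ht]
    push_cast
    linear_combination ((t : ZMod (p^2)) * t) * hpp
  have hk1 : k - 1 + 1 = k := by omega
  have hk2 : k - 1 + 2 = k + 1 := by omega
  have hLF : (Nat.fib (k-1) : ZMod (p^2))
      = (Nat.fib (k+1) : ZMod (p^2)) - (Nat.fib k : ZMod (p^2)) := by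
    have h := Nat.fib_add_two (n := k - 1)
    rw [hk2, hk1] at h
    rw [h]
    push_cast
    ring
  induction m with
  | zero => constructor <;> norm_num
  | succ m ih =>
    obtain ⟨ih1, ih2⟩ := ih
    constructor
    · have e1 : (m+2)*k = (m+1)*k + (k-1) + 1 := by
        rw [show (m+2)*k = (m+1)*k + k from by ring]
        omega
      rw [show m + 1 + 1 = m + 2 by ring, e1, Nat.fib_add]
      push_cast
      rw [hk1, ih1, ih2, hLF]
      linear_combination (-((m:ZMod (p^2))+1) * (Nat.fib (k+1) : ZMod (p^2))^m) * hFF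
    · have e2 : (m+2)*k + 1 = (m+1)*k + k + 1 := by ring
      rw [show m + 1 + 1 = m + 2 by ring, e2, Nat.fib_add]
      push_cast
      rw [ih1, ih2]
      linear_combination (((m:ZMod (p^2))+1) * (Nat.fib (k+1) : ZMod (p^2))^m) * hFF

theorem sq_dvd_fib_kappa_iff (p : ℕ) (hp : p.Prime) (h2 : p ≠ 2) (h5 : p ≠ 5)
    (hmod : p % 5 = 1 ∨ p % 5 = 4) :
    p ^ 2 ∣ Nat.fib (kappa p) ↔ p ^ 2 ∣ Nat.fib (p - 1) := by
  haveI : Fact p.Prime := ⟨hp⟩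
  have hp3 : 3 ≤ p := by
    have := hp.two_le
    omega
  obtain ⟨hf0, hf1⟩ := fib_p_entry h2 h5 hmod
  set S : Set ℕ := {l : ℕ | 0 < l ∧ Nat.fib l % p = 0 ∧ Nat.fib (l + 1) % p = 1} with hS
  have hpmem : (p - 1) ∈ S := by
    refine ⟨by omega, hf0, ?_⟩
    rw [Nat.sub_add_cancel (by omega)]
    exact hf1
  have hkdef : kappa p = sInf S := rfl
  have hκmem : kappa p ∈ S := hkdef ▸ Nat.sInf_mem ⟨_, hpmem⟩
  obtain ⟨hκpos, hκ0, hκ1⟩ := hκmem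
  set k := kappa p with hk
  -- conversions to ZMod p
  have h0 : (Nat.fib k : ZMod p) = 0 := by
    rw [ZMod.natCast_eq_zero_iff]
    exact Nat.dvd_of_mod_eq_zero hκ0
  have h1 : (Nat.fib (k+1) : ZMod p) = 1 := by
    rw [← ZMod.natCast_mod, hκ1, Nat.cast_one]
  -- k divides p - 1
  have hkdvd : k ∣ p - 1 := by
    have hmd := Nat.mod_add_div (p-1) k
    set r := (p-1) % k with hr
    set q := (p-1) / k with hq
    have e : p - 1 = r + q * k := by rw [mul_comm]; omega
    have h0' : (Nat.fib r : ZMod p) = 0 := by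
      rw [← fib_period_mul h0 h1 q r, ← e, ZMod.natCast_eq_zero_iff]
      exact Nat.dvd_of_mod_eq_zero hf0
    have h1' : (Nat.fib (r+1) : ZMod p) = 1 := by
      have e2 : r + 1 + q * k = p := by omega
      rw [← fib_period_mul h0 h1 q (r+1), e2, ← ZMod.natCast_mod, hf1, Nat.cast_one]
    rcases Nat.eq_zero_or_pos r with h | h
    · exact Nat.dvd_of_mod_eq_zero h
    · exfalso
      have hrS : r ∈ S := by
        refine ⟨h, ?_, ?_⟩
        · rw [ZMod.natCast_eq_zero_iff] at h0'
          exact Nat.dvd_iff_mod_eq_zero.mp h0'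
        · have := (ZMod.natCast_eq_natCast_iff _ _ _).mp (h1'.trans (Nat.cast_one).symm)
          unfold Nat.ModEq at this
          rwa [Nat.one_mod_eq_one.mpr hp.ne_one] at this
      have := hkdef ▸ Nat.sInf_le hrS
      have hrk : r < k := Nat.mod_lt _ hκpos
      omega
  set m := (p-1) / k with hm
  have hmk : k * m = p - 1 := Nat.mul_div_cancel' hkdvd
  have hm1 : 1 ≤ m := by
    rcases Nat.eq_zero_or_pos m with h | h
    · rw [h, mul_zero] at hmk; omega
    · exact h
  obtain ⟨e1, -⟩ := fib_mul_entry (p := p) hκpos (Nat.dvd_of_mod_eq_zero hκ0) (m - 1)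
  have em : (m - 1 + 1) * k = p - 1 := by
    rw [Nat.sub_add_cancel hm1, mul_comm]
    exact hmk
  rw [em] at e1
  have hcm : ((m - 1 : ℕ) : ZMod (p^2)) + 1 = ((m : ℕ) : ZMod (p^2)) := by
    rw [Nat.cast_sub hm1]
    push_cast
    ring
  rw [hcm] at e1
  -- units
  have hpnd : ¬ p ∣ Nat.fib (k+1) := by
    intro h
    have := Nat.dvd_iff_mod_eq_zero.mp h
    omega
  have huL : IsUnit ((Nat.fib (k+1) : ℕ) : ZMod (p^2)) := by
    rw [ZMod.isUnit_iff_coprime]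
    exact Nat.Coprime.pow_right 2 ((hp.coprime_iff_not_dvd.mpr hpnd).symm)
  have hum : IsUnit ((m : ℕ) : ZMod (p^2)) := by
    rw [ZMod.isUnit_iff_coprime]
    refine Nat.Coprime.pow_right 2 ?_
    refine (hp.coprime_iff_not_dvd.mpr ?_).symm
    intro h
    have h1 := Nat.le_of_dvd (by omega) h
    have h2 := Nat.le_of_dvd (by omega) (⟨k, by rw [← hmk]; ring⟩ : m ∣ p - 1)
    omega
  rw [← ZMod.natCast_eq_zero_iff, ← ZMod.natCast_eq_zero_iff, e1]
  constructor
  · intro h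
    rw [h]
    ring
  · intro h
    have h' : (((m : ℕ) : ZMod (p^2)) * ((Nat.fib (k+1) : ℕ) : ZMod (p^2))^(m-1))
        * ((Nat.fib k : ℕ) : ZMod (p^2)) = 0 := by
      linear_combination h
    exact (IsUnit.mul_right_eq_zero (hum.mul (huL.pow _))).mp h'
end

section
/- Let p be a prime with p ≡ 1 (mod 4) and p ≡ ±1 (mod 5), and write p = a² + b² with a odd and b even. Then the following are equivalent: (i) 5 is a quartic residue modulo p, i.e. 5^{(p−1)/4} ≡ 1 (mod p); (ii) 5 divides b; (iii) 5 does not divide a. -/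
lemma five_dvd_iff (p : ℕ) (h5 : p % 5 = 1 ∨ p % 5 = 4) (x y : ℤ)
    (hxy : (p : ℤ) = x ^ 2 + y ^ 2) : (5 : ℤ) ∣ x ↔ ¬ (5 : ℤ) ∣ y := by
  have hc : ((x : ZMod 5)) ^ 2 + (y : ZMod 5) ^ 2 = ((p : ℕ) : ZMod 5) := by
    have := congrArg (fun z : ℤ => (z : ZMod 5)) hxy
    push_cast at this; rw [this]
  have hp5 : ((p : ℕ) : ZMod 5) = 1 ∨ ((p : ℕ) : ZMod 5) = 4 := by
    rw [← ZMod.natCast_mod]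
    rcases h5 with h | h <;> rw [h] <;> [left; right] <;> rfl
  have e1 := ZMod.intCast_zmod_eq_zero_iff_dvd x 5
  have e2 := ZMod.intCast_zmod_eq_zero_iff_dvd y 5
  push_cast at e1 e2
  rw [← e1, ← e2]
  clear e1 e2 hxy h5
  set u := (x : ZMod 5); set v := (y : ZMod 5)
  clear_value u v
  rcases hp5 with h | h <;> rw [h] at hc <;> revert hc <;> revert u v <;> decide

lemma two_sq_unique (p : ℕ) (hp : p.Prime) (a b c d : ℤ)
    (h1 : (p : ℤ) = a ^ 2 + b ^ 2) (h2 : (p : ℤ) = c ^ 2 + d ^ 2)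
    (ha : Odd a) (hb : Even b) (hc : Odd c) (hd : Even d) :
    d = b ∨ d = -b := by
  have hpZ : Prime (p : ℤ) := Int.prime_iff_natAbs_prime.mpr (by simpa using hp)
  have hp0 : (0 : ℤ) < (p : ℤ) := by exact_mod_cast hp.pos
  have key : (p : ℤ) ∣ (a * c + b * d) * (a * c - b * d) := by
    refine ⟨a ^ 2 - d ^ 2, ?_⟩
    linear_combination d^2*h1 - a^2*h2
  have hab : IsCoprime a b := by
    rw [Int.isCoprime_iff_gcd_eq_one]
    obtain ⟨g, hgdef⟩ : ∃ g : ℕ, g = Int.gcd a b := ⟨_, rfl⟩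
    rw [← hgdef]
    obtain ⟨a', ha'⟩ : (g : ℤ) ∣ a := hgdef ▸ Int.gcd_dvd_left a b
    obtain ⟨b', hb'⟩ : (g : ℤ) ∣ b := hgdef ▸ Int.gcd_dvd_right a b
    have hsq : g ^ 2 ∣ p := by
      have : ((g : ℤ)) ^ 2 ∣ (p : ℤ) := ⟨a' ^ 2 + b' ^ 2, by rw [h1, ha', hb']; ring⟩
      exact_mod_cast this
    have hgp : g ∣ p := dvd_trans (dvd_pow_self g two_ne_zero) hsq
    rcases (Nat.dvd_prime hp).mp hgp with h | h
    · exact h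
    · exfalso
      rw [h] at hsq
      have := Nat.le_of_dvd hp.pos hsq
      nlinarith [hp.two_le]
  have hodd : Odd (a * c + b * d) ∧ Odd (a * c - b * d) :=
    ⟨(ha.mul hc).add_even (hb.mul_right d), (ha.mul hc).sub_even (hb.mul_right d)⟩
  have finish : ∀ s t : ℤ, (p:ℤ) ∣ s → Odd s → s^2 + t^2 = (p:ℤ)^2 →
      (a * d = b * c + t ∨ a * d = -(b * c) + t) → d = b ∨ d = -b := by
    intro s t hdvd hso hst hadt
    obtain ⟨k, hk⟩ := hdvd
    have hs0 : s ≠ 0 := by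
      rintro rfl; exact (Int.not_odd_iff_even.mpr Even.zero) hso
    have hk0 : k ≠ 0 := by rintro rfl; simp at hk; exact hs0 hk
    have hk1 : 1 ≤ k ^ 2 := by
      have := Int.one_le_abs (by simpa using hk0)
      nlinarith [sq_abs k]
    have ht0 : t = 0 := by
      have h0 : t ^ 2 = (p:ℤ)^2 * (1 - k^2) := by rw [hk] at hst; linarith [hst]
      have : t ^ 2 = 0 := by nlinarith [sq_nonneg t]
      exact pow_eq_zero_iff two_ne_zero |>.mp this
    rw [ht0, add_zero] at hadt
    have ha0 : a ≠ 0 := by rintro rfl; exact (Int.not_odd_iff_even.mpr Even.zero) ha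
    have hac : a ∣ c := by
      rcases hadt with h | h
      · exact hab.dvd_of_dvd_mul_left ⟨d, by linarith⟩
      · exact hab.dvd_of_dvd_mul_left ⟨-d, by linarith⟩
    obtain ⟨e, he⟩ := hac
    have hde : d = b * e ∨ d = -(b * e) := by
      rcases hadt with h | h
      · left; exact mul_left_cancel₀ ha0 (by rw [h, he]; ring)
      · right; exact mul_left_cancel₀ ha0 (by rw [h, he]; ring)
    have hd2 : d ^ 2 = (b * e) ^ 2 := by rcases hde with h | h <;> rw [h] <;> ring
    have he1 : e = 1 ∨ e = -1 := by
      have hpe : (p:ℤ) = e ^ 2 * (p:ℤ) := by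
        linear_combination h2 + (c + a*e)*he - e^2*h1 + hd2
      have he2 : e ^ 2 = 1 := by
        have h' : (p:ℤ) * (e ^ 2) = (p:ℤ) * 1 := by linarith
        have := mul_left_cancel₀ (ne_of_gt hp0) h'
        linarith
      exact Int.isUnit_iff.mp (IsUnit.of_mul_eq_one (a := e) e (by nlinarith))
    rcases he1 with rfl | rfl <;> rcases hde with h | h
    · left; simpa using h
    · right; simpa using h
    · right; simpa using h
    · left; simpa using h
  rcases hpZ.dvd_mul.mp key with hdvd | hdvd
  · exact finish _ (a*d - b*c) hdvd hodd.1 (by linear_combination (-(p:ℤ))*h1 - (a^2+b^2)*h2) (Or.inl (by ring))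
  · exact finish _ (a*d + b*c) hdvd hodd.2 (by linear_combination (-(p:ℤ))*h1 - (a^2+b^2)*h2) (Or.inr (by ring))





-- freshman's dream mod 5 for sums in a subring
lemma pow5_sum {α : Type*} (T : Subalgebra ℤ ℂ) (s : Finset α) (f : α → ℂ)
    (hf : ∀ a ∈ s, f a ∈ T) :
    ∃ t ∈ T, (∑ a ∈ s, f a) ^ 5 = (∑ a ∈ s, (f a) ^ 5) + 5 * t := by
  classical
  induction s using Finset.cons_induction with
  | empty => exact ⟨0, zero_mem T, by simp⟩
  | cons a s ha ih =>
    obtain ⟨t, ht, hsum⟩ := ih (fun x hx => hf x (Finset.mem_cons_of_mem hx))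
    have hfa : f a ∈ T := hf a (Finset.mem_cons_self a s)
    have hS : (∑ x ∈ s, f x) ∈ T := Subalgebra.sum_mem T (fun x hx => hf x (Finset.mem_cons_of_mem hx))
    refine ⟨t + (f a ^ 4 * (∑ x ∈ s, f x) + 2 * f a ^ 3 * (∑ x ∈ s, f x) ^ 2 +
      2 * f a ^ 2 * (∑ x ∈ s, f x) ^ 3 + f a * (∑ x ∈ s, f x) ^ 4), ?_, ?_⟩
    · refine add_mem ht ?_
      refine add_mem (add_mem (add_mem ?_ ?_) ?_) ?_
      · exact mul_mem (pow_mem hfa 4) hS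
      · exact mul_mem (mul_mem (by exact_mod_cast Subalgebra.natCast_mem T 2) (pow_mem hfa 3)) (pow_mem hS 2)
      · exact mul_mem (mul_mem (by exact_mod_cast Subalgebra.natCast_mem T 2) (pow_mem hfa 2)) (pow_mem hS 3)
      · exact mul_mem hfa (pow_mem hS 4)
    · rw [Finset.sum_cons, Finset.sum_cons]
      have expand : (f a + ∑ x ∈ s, f x) ^ 5 = f a ^ 5 + (∑ x ∈ s, f x) ^ 5 +
          5 * (f a ^ 4 * (∑ x ∈ s, f x) + 2 * f a ^ 3 * (∑ x ∈ s, f x) ^ 2 +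
          2 * f a ^ 2 * (∑ x ∈ s, f x) ^ 3 + f a * (∑ x ∈ s, f x) ^ 4) := by ring
      rw [expand, hsum]; ring

-- elements of ℤ[i] as a + b I
lemma adjoin_I_form (w : ℂ) (hw : w ∈ Algebra.adjoin ℤ {Complex.I}) :
    ∃ u v : ℤ, w = (u : ℂ) + (v : ℂ) * Complex.I := by
  induction hw using Algebra.adjoin_induction with
  | mem x hx =>
    rcases hx with rfl
    exact ⟨0, 1, by simp⟩
  | algebraMap r => exact ⟨r, 0, by simp⟩
  | add x y _ _ hx hy =>
    obtain ⟨u1, v1, rfl⟩ := hx; obtain ⟨u2, v2, rfl⟩ := hy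
    exact ⟨u1 + u2, v1 + v2, by push_cast; ring⟩
  | mul x y _ _ hx hy =>
    obtain ⟨u1, v1, rfl⟩ := hx; obtain ⟨u2, v2, rfl⟩ := hy
    refine ⟨u1 * u2 - v1 * v2, u1 * v2 + v1 * u2, ?_⟩
    push_cast
    linear_combination (v1 * v2 : ℂ) * Complex.I_sq

-- 2 is not 5 times an algebraic integer
lemma two_ne_five_mul (T : Subalgebra ℤ ℂ) (hT : ∀ x ∈ T, IsIntegral ℤ x)
    (t : ℂ) (ht : t ∈ T) : (2 : ℂ) ≠ 5 * t := by
  intro h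
  have ht25 : t = ((2 / 5 : ℚ) : ℂ) := by
    push_cast
    rw [eq_div_iff (by norm_num : (5:ℂ) ≠ 0)]
    linear_combination -h
  have hint : IsIntegral ℤ t := hT t ht
  rw [ht25] at hint
  have : IsIntegral ℤ (2 / 5 : ℚ) := by
    have : algebraMap ℚ ℂ (2 / 5 : ℚ) = ((2 / 5 : ℚ) : ℂ) := rfl
    rw [← this] at hint
    exact (isIntegral_algebraMap_iff (algebraMap ℚ ℂ).injective).mp hint
  obtain ⟨y, hy⟩ := IsIntegrallyClosed.isIntegral_iff.mp this
  have : (y : ℚ) = 2 / 5 := hy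
  have h5y : (5 * y : ℤ) = 2 := by
    have : ((5 * y : ℤ) : ℚ) = ((2 : ℤ) : ℚ) := by push_cast; linarith [this]
    exact_mod_cast this
  omega

-- the quartic-root case analysis
lemma quartic_root_eq (T : Subalgebra ℤ ℂ) (hT : ∀ x ∈ T, IsIntegral ℤ x)
    (hIT : Complex.I ∈ T) (c : ℂ) (hc : c ^ 4 = 1) (ε : ℤ) (hε : ε = 1 ∨ ε = -1)
    (t : ℂ) (ht : t ∈ T) (heq : c - (ε : ℂ) = 5 * t) : c = (ε : ℂ) := by
  have hcases : c = 1 ∨ c = -1 ∨ c = Complex.I ∨ c = -Complex.I := by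
    have h1 : (c - 1) * (c + 1) * (c - Complex.I) * (c + Complex.I) = 0 := by
      linear_combination hc - (c^2 - 1) * Complex.I_sq
    rcases mul_eq_zero.mp h1 with h2 | h2
    · rcases mul_eq_zero.mp h2 with h3 | h3
      · rcases mul_eq_zero.mp h3 with h4 | h4
        · left; linear_combination h4
        · right; left; linear_combination h4
      · right; right; left; linear_combination h3
    · right; right; right; linear_combination h2
  have bad : ∀ u v : ℤ, u^2 + v^2 = 2 → (u:ℂ) + (v:ℂ) * Complex.I = 5 * t → False := by
    intro u v huv hw
    have hconj : ((u:ℂ) + (v:ℂ)*Complex.I) * ((u:ℂ) - (v:ℂ)*Complex.I) = 2 := by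
      have h9 : ((u:ℂ) + (v:ℂ)*Complex.I) * ((u:ℂ) - (v:ℂ)*Complex.I)
          = ((u^2 + v^2 : ℤ) : ℂ) := by push_cast; linear_combination (-((v:ℂ)^2)) * Complex.I_sq
      rw [h9, huv]; norm_num
    have h2 : (2 : ℂ) = 5 * (t * ((u:ℂ) - (v:ℂ)*Complex.I)) := by
      rw [← hconj, hw]; ring
    refine two_ne_five_mul T hT _ ?_ h2
    refine mul_mem ht (sub_mem ?_ (mul_mem ?_ hIT))
    · exact_mod_cast Subalgebra.intCast_mem T u
    · exact_mod_cast Subalgebra.intCast_mem T v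
  rcases hε with rfl | rfl <;> rcases hcases with rfl | rfl | rfl | rfl
  · norm_num
  · exact absurd (show (2:ℂ) = 5 * (-t) by push_cast at heq; linear_combination -heq)
      (two_ne_five_mul T hT (-t) (neg_mem ht))
  · exact absurd heq (fun heq => bad (-1) 1 (by norm_num) (by rw [← heq]; push_cast; ring))
  · exact absurd heq (fun heq => bad (-1) (-1) (by norm_num) (by rw [← heq]; push_cast; ring))
  · exact absurd (show (2:ℂ) = 5 * t by push_cast at heq; linear_combination heq)
      (two_ne_five_mul T hT t ht)
  · norm_num
  · exact absurd heq (fun heq => bad 1 1 (by norm_num) (by rw [← heq]; push_cast; ring))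
  · exact absurd heq (fun heq => bad 1 (-1) (by norm_num) (by rw [← heq]; push_cast; ring))



open Complex

section Char
variable (p : ℕ) [Fact p.Prime]

lemma quartic_core (hp : p.Prime) (h4 : p % 4 = 1) (h5 : p % 5 = 1 ∨ p % 5 = 4) :
    ∃ a' b' : ℤ, (p:ℤ) = a'^2 + b'^2 ∧ Odd a' ∧ Even b' ∧
      (((5 : ZMod p) ^ ((p - 1) / 4) = 1) ↔ (5:ℤ) ∣ b') := by
  have hp5 : 5 ≤ p := by
    clear h5
    rcases Nat.lt_or_ge p 5 with h | h
    · have h2 := hp.two_le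
      interval_cases p <;> omega
    · exact h
  have hdvd : 4 ∣ p - 1 := by omega
  have hpgt : 5 < p := by rcases h5 with h | h <;> omega
  haveI : NeZero (p - 1) := ⟨by omega⟩
  obtain ⟨g, hg⟩ := IsCyclic.exists_generator (α := (ZMod p)ˣ)
  have horder : orderOf g = p - 1 := by
    rw [orderOf_eq_card_of_forall_mem_zpowers hg, Nat.card_eq_fintype_card]
    rw [ZMod.card_units_eq_totient, Nat.totient_prime hp]
  have hgprim : IsPrimitiveRoot g (p - 1) := horder ▸ IsPrimitiveRoot.orderOf g
  set E := hgprim.zmodEquivZPowers with hE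
  set ind : (ZMod p)ˣ → ZMod (p - 1) :=
    fun x => E.symm (Additive.ofMul (⟨x, hg x⟩ : Subgroup.zpowers g)) with hind
  have ind_pow : ∀ k : ℕ, ind (g ^ k) = (k : ZMod (p - 1)) := by
    intro k
    exact hgprim.zmodEquivZPowers_symm_apply_pow k
  have ind_mul : ∀ x y, ind (x * y) = ind x + ind y := by
    intro x y
    have h1 : (⟨x * y, hg _⟩ : Subgroup.zpowers g) = ⟨x, hg x⟩ * ⟨y, hg y⟩ := rfl
    simp only [hind, h1, ofMul_mul, map_add]
  have gpow_ind : ∀ x, g ^ (ind x).val = x := by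
    intro x
    have h1 : ind (g ^ (ind x).val) = ind x := by
      rw [ind_pow, ZMod.natCast_val, ZMod.cast_id]
    have hinj : Function.Injective ind := by
      intro x y hxy
      have := E.symm.injective hxy
      simpa [Subtype.ext_iff] using this
    exact hinj h1
  -- the 4th root of unity
  have hImul : Complex.I * (-Complex.I) = 1 := by simp [Complex.I_mul_I]
  set Iu : ℂˣ := Units.mkOfMulEqOne _ _ hImul with hIu
  have hIuval : (Iu : ℂ) = Complex.I := rfl
  have hIu4 : Iu ^ 4 = 1 := by
    ext
    push_cast [hIuval]
    simp [pow_succ, Complex.I_mul_I]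
  set zc : AddChar (ZMod 4) ℂˣ := AddChar.zmodChar 4 hIu4 with hzc
  set f : (ZMod p)ˣ →* ℂˣ :=
    { toFun := fun x => zc (ZMod.castHom hdvd (ZMod 4) (ind x)),
      map_one' := by
        have h1 : ind 1 = 0 := by simpa using ind_pow 0
        simp [h1],
      map_mul' := by
        intro x y
        simp [ind_mul, map_add, AddChar.map_add_eq_mul] } with hf
  set χ : MulChar (ZMod p) ℂ := MulChar.ofUnitHom f with hχ
  have χ_val : ∀ x : (ZMod p)ˣ,
      χ ↑x = Complex.I ^ ((ZMod.castHom hdvd (ZMod 4) (ind x)).val) := by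
    intro x
    rw [hχ, MulChar.ofUnitHom_coe]
    simp only [hf, MonoidHom.coe_mk, OneHom.coe_mk, hzc, AddChar.zmodChar_apply]
    push_cast [hIuval]
    rfl
  -- basic χ facts
  have χg : χ ↑g = Complex.I := by
    rw [χ_val g]
    have h1 : ind g = 1 := by simpa using ind_pow 1
    rw [h1, map_one]
    norm_num [show (1 : ZMod 4).val = 1 from by decide]
  have χvals : ∀ x : (ZMod p)ˣ, ∃ n : ℕ, χ ↑x = Complex.I ^ n :=
    fun x => ⟨_, χ_val x⟩
  have χ4 : χ ^ 4 = 1 := by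
    apply MulChar.ext
    intro a
    rw [MulChar.pow_apply' χ (by norm_num) a, MulChar.one_apply_coe]
    obtain ⟨n, hn⟩ := χvals a
    rw [hn, ← pow_mul, mul_comm, pow_mul]
    norm_num [pow_succ, Complex.I_mul_I]
  have χ2ne : χ * χ ≠ 1 := by
    intro h
    have := congrArg (fun c : MulChar (ZMod p) ℂ => c ↑g) h
    simp only [MulChar.coeToFun_mul, Pi.mul_apply, MulChar.one_apply_coe, χg] at this
    rw [Complex.I_mul_I] at this
    norm_num at this
  have χne : χ ≠ 1 := by
    intro h
    have := congrArg (fun c : MulChar (ZMod p) ℂ => c ↑g) h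
    simp only [MulChar.one_apply_coe, χg] at this
    revert this
    norm_num [Complex.ext_iff]
  -- the unit 5
  have h5ne : (5 : ZMod p) ≠ 0 := by
    have : ((5 : ℕ) : ZMod p) ≠ 0 := by
      rw [Ne, ZMod.natCast_eq_zero_iff]
      intro hdp
      have := (Nat.prime_dvd_prime_iff_eq hp (by norm_num)).mp hdp
      omega
    simpa using this
  have h5u : IsUnit (5 : ZMod p) := isUnit_iff_ne_zero.mpr h5ne
  set u5 : (ZMod p)ˣ := h5u.unit with hu5
  have hu5val : (u5 : ZMod p) = 5 := rfl
  set k : ℕ := (ind u5).val with hk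
  have hk5 : g ^ k = u5 := gpow_ind u5
  set m : ℕ := (p - 1) / 4 with hm
  have hm0 : 0 < m := by omega
  have hlink : ((5 : ZMod p) ^ m = 1) ↔ 4 ∣ k := by
    rw [← hu5val, ← hk5]
    have : ((g ^ k : (ZMod p)ˣ) : ZMod p) ^ m = ((g ^ (k * m) : (ZMod p)ˣ) : ZMod p) := by
      push_cast [← pow_mul]
      rfl
    rw [this]
    rw [← Units.val_one (α := ZMod p), Units.val_inj]
    rw [← orderOf_dvd_iff_pow_eq_one, horder]
    have hpm : p - 1 = 4 * m := by omega
    rw [hpm, mul_comm k m, mul_comm 4 m]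
    exact mul_dvd_mul_iff_left (by omega : m ≠ 0)
  have χ5 : χ (5 : ZMod p) = Complex.I ^ (k % 4) := by
    rw [← hu5val, χ_val u5]
    congr 1
    have h1 : ind u5 = (k : ZMod (p - 1)) := by rw [hk, ZMod.natCast_val, ZMod.cast_id]
    rw [h1, map_natCast, ZMod.val_natCast]
  have hIlink : (Complex.I ^ (k % 4) = 1) ↔ 4 ∣ k := by
    rw [Nat.dvd_iff_mod_eq_zero]
    have hlt : k % 4 < 4 := Nat.mod_lt _ (by norm_num)
    set r := k % 4 with hr
    clear_value r
    interval_cases r <;>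
      norm_num [pow_succ, Complex.ext_iff, Complex.I_mul_I]
  have key5 : χ (5 : ZMod p) = 1 ↔ (5 : ZMod p) ^ m = 1 := by
    rw [χ5, hIlink, hlink]
  -- ============ additive character and Gauss sum setup ============
  have hI4 : IsPrimitiveRoot Complex.I 4 := by
    constructor
    · norm_num [pow_succ, Complex.I_mul_I]
    · intro l hl
      have hmod : Complex.I ^ (l % 4) = 1 := by
        rw [← pow_eq_pow_mod l (by norm_num [pow_succ, Complex.I_mul_I] : Complex.I ^ 4 = 1)]
        exact hl
      rw [Nat.dvd_iff_mod_eq_zero]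
      have hlt : l % 4 < 4 := Nat.mod_lt _ (by norm_num)
      set r := l % 4 with hr
      clear_value r
      interval_cases r <;> revert hmod <;>
        norm_num [pow_succ, Complex.ext_iff, Complex.I_mul_I]
  have hζprim : IsPrimitiveRoot (Complex.exp (2 * Real.pi * Complex.I / p)) p :=
    Complex.isPrimitiveRoot_exp p (by omega)
  set ζ : ℂ := Complex.exp (2 * Real.pi * Complex.I / p) with hζdef
  set ψ : AddChar (ZMod p) ℂ :=
    AddChar.zmodChar p ((IsPrimitiveRoot.iff_def ζ p).mp hζprim).left with hψdef
  have hψprim : ψ.IsPrimitive := AddChar.zmodChar_primitive_of_primitive_root p hζprim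
  have hψ_apply : ∀ x : ZMod p, ψ x = ζ ^ x.val := fun x => rfl
  set T : Subalgebra ℤ ℂ := Algebra.adjoin ℤ ({Complex.I, ζ} : Set ℂ) with hT
  have hIT : Complex.I ∈ T := Algebra.subset_adjoin (by simp)
  have hζT : ζ ∈ T := Algebra.subset_adjoin (by simp)
  have hTint : ∀ x ∈ T, IsIntegral ℤ x := by
    intro x hx
    have hsub : Algebra.adjoin ℤ ({Complex.I, ζ} : Set ℂ) ≤ integralClosure ℤ ℂ := by
      apply Algebra.adjoin_le
      rintro y hy
      rcases hy with rfl | rfl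
      · exact hI4.isIntegral (by norm_num)
      · exact hζprim.isIntegral (by omega)
    exact hsub hx
  set G : ℂ := gaussSum χ ψ with hG
  set J : ℂ := jacobiSum χ χ with hJdef
  -- g^4 = p J^2
  have hq : (χ * χ).IsQuadratic := by
    intro x
    by_cases hx : IsUnit x
    · rcases hx with ⟨y, rfl⟩
      obtain ⟨n, hn⟩ := χvals y
      rw [MulChar.coeToFun_mul, Pi.mul_apply, hn, ← pow_add, ← two_mul, pow_mul,
        Complex.I_sq]
      rcases Nat.even_or_odd n with he | ho
      · right; left; exact he.neg_one_pow
      · right; right; exact ho.neg_one_pow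
    · left; exact MulChar.map_nonunit _ hx
  have hχχ1 : (χ * χ) (-1 : ZMod p) = 1 := by
    rw [MulChar.coeToFun_mul, Pi.mul_apply, ← map_mul]
    norm_num
  have hg2 : gaussSum (χ * χ) ψ * J = G * G := jacobiSum_mul_nontrivial χ2ne ψ
  have hgsq : gaussSum (χ * χ) ψ ^ 2 = (p : ℂ) := by
    have h := gaussSum_sq χ2ne hq hψprim
    rw [hχχ1, one_mul] at h
    rw [h, ZMod.card]
  have hg4 : G ^ 4 = (p : ℂ) * J ^ 2 := by
    calc G ^ 4 = (G * G) ^ 2 := by ring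
    _ = (gaussSum (χ * χ) ψ * J) ^ 2 := by rw [hg2]
    _ = gaussSum (χ * χ) ψ ^ 2 * J ^ 2 := by ring
    _ = (p : ℂ) * J ^ 2 := by rw [hgsq]
  -- J * conj J = p
  have hchar : ringChar ℂ ≠ ringChar (ZMod p) := by
    have h0 : ringChar ℂ = 0 := ringChar.eq_zero
    have h1 : ringChar (ZMod p) = p := ZMod.ringChar_zmod_n p
    rw [h0, h1]; omega
  have hJJinv : J * jacobiSum χ⁻¹ χ⁻¹ = (p : ℂ) := by
    have h := jacobiSum_mul_jacobiSum_inv hchar χne χne χ2ne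
    rw [ZMod.card] at h
    exact h
  have hconjhom : χ.ringHomComp (starRingEnd ℂ) = χ⁻¹ := by
    have hmul : χ.ringHomComp (starRingEnd ℂ) * χ = 1 := by
      apply MulChar.ext
      intro a
      rw [MulChar.coeToFun_mul, Pi.mul_apply, MulChar.ringHomComp_apply, MulChar.one_apply_coe]
      obtain ⟨n, hn⟩ := χvals a
      rw [hn, map_pow, Complex.conj_I, ← mul_pow]
      norm_num
    exact eq_inv_of_mul_eq_one_left hmul
  have hJconj : jacobiSum χ⁻¹ χ⁻¹ = (starRingEnd ℂ) J := by
    rw [← hconjhom, hJdef, ← jacobiSum_ringHomComp]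
  -- J = a' + b' I with a' odd, b' even
  obtain ⟨z, hzmem, hzeq⟩ := exists_jacobiSum_eq_neg_one_add (by norm_num : (2:ℕ) < 4)
    χ4 χ4 (by rw [ZMod.card]; exact hdvd) hI4
  obtain ⟨u, v, rfl⟩ := adjoin_I_form z hzmem
  set a' : ℤ := 2 * v - 1 with ha'def
  set b' : ℤ := -(2 * u) with hb'def
  have hJval : J = (a' : ℂ) + (b' : ℂ) * Complex.I := by
    rw [hJdef, hzeq, ha'def, hb'def]
    push_cast
    linear_combination ((u : ℂ) - 2 * v + v * Complex.I) * Complex.I_sq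
  have ha'odd : Odd a' := ⟨v - 1, by ring⟩
  have hb'even : Even b' := ⟨-u, by ring⟩
  have hpa'b' : (p : ℤ) = a' ^ 2 + b' ^ 2 := by
    have hcpx : (p : ℂ) = ((a' ^ 2 + b' ^ 2 : ℤ) : ℂ) := by
      rw [← hJJinv, hJconj, hJval]
      simp only [map_add, map_mul, map_intCast, Complex.conj_I]
      push_cast
      linear_combination (-((b' : ℂ) ^ 2)) * Complex.I_sq
    exact_mod_cast hcpx
  -- membership facts
  have hχT : ∀ x : ZMod p, χ x ∈ T := by
    intro x
    by_cases hx : IsUnit x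
    · rcases hx with ⟨y, rfl⟩
      obtain ⟨n, hn⟩ := χvals y
      rw [hn]; exact pow_mem hIT n
    · rw [MulChar.map_nonunit χ hx]; exact zero_mem T
  have hψT : ∀ x : ZMod p, ψ x ∈ T := fun x => by rw [hψ_apply]; exact pow_mem hζT _
  have hGT : G ∈ T := Subalgebra.sum_mem T (fun x _ => mul_mem (hχT x) (hψT x))
  -- Frobenius congruence
  obtain ⟨t, htT, hfrob⟩ := pow5_sum T Finset.univ (fun x : ZMod p => χ x * ψ x)
    (fun x _ => mul_mem (hχT x) (hψT x))
  have hfrob' : G ^ 5 = gaussSum χ (ψ.mulShift 5) + 5 * t := by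
    rw [hG]
    rw [show gaussSum χ ψ = ∑ x : ZMod p, χ x * ψ x from rfl, hfrob]
    congr 1
    rw [show gaussSum χ (ψ.mulShift 5) = ∑ x : ZMod p, χ x * (ψ.mulShift 5) x from rfl]
    apply Finset.sum_congr rfl
    intro x _
    rw [mul_pow, AddChar.mulShift_apply]
    have h1 : χ x ^ 5 = χ x := by
      by_cases hx : IsUnit x
      · rcases hx with ⟨y, rfl⟩
        obtain ⟨n, hn⟩ := χvals y
        rw [hn, ← pow_mul, show n * 5 = 4 * n + n by ring, pow_add, pow_mul]
        norm_num [show Complex.I ^ 4 = 1 by norm_num [pow_succ, Complex.I_mul_I]]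
      · rw [MulChar.map_nonunit χ hx]; norm_num
    have h2 : ψ x ^ 5 = ψ (5 * x) := by
      rw [hψ_apply, hψ_apply, ← pow_mul]
      have hval5 : (5 * x).val = (5 * x.val) % p := by
        have h55 : (5 : ZMod p) = ((5:ℕ) : ZMod p) := by push_cast; rfl
        rw [h55, ZMod.val_mul, ZMod.val_natCast, Nat.mod_eq_of_lt hpgt]
      rw [hval5, ← pow_eq_pow_mod _ hζprim.pow_eq_one, mul_comm]
    rw [h1, h2]
  have hshift : χ (5 : ZMod p) * gaussSum χ (ψ.mulShift 5) = G := by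
    have h := gaussSum_mulShift χ ψ u5
    simpa [hu5val] using h
  set c : ℂ := χ (5 : ZMod p) with hcdef
  have hc4 : c ^ 4 = 1 := by
    obtain ⟨n, hn⟩ := χvals u5
    rw [hcdef, ← hu5val, hn, ← pow_mul, mul_comm, pow_mul]
    norm_num [show Complex.I ^ 4 = 1 by norm_num [pow_succ, Complex.I_mul_I]]
  have hmain : c * ((p:ℂ) * J ^ 2) ^ 2 - (p:ℂ) * J ^ 2 = 5 * (c * t * G ^ 3) := by
    rw [← hg4]
    linear_combination (c * G ^ 3) * hfrob' + G ^ 3 * hshift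
  -- case split on divisibility
  have hone : (5:ℤ) ∣ a' ↔ ¬ (5:ℤ) ∣ b' := five_dvd_iff p h5 a' b' hpa'b'
  have hdvd_iff : ∀ z : ℤ, ((5:ℤ) ∣ z ↔ ((z : ZMod 5) = 0)) := by
    intro z
    have e := ZMod.intCast_zmod_eq_zero_iff_dvd z 5
    push_cast at e
    exact e.symm
  refine ⟨a', b', hpa'b', ha'odd, hb'even, ?_⟩
  show ((5 : ZMod p) ^ m = 1) ↔ (5:ℤ) ∣ b'
  have hp5' : ((p : ℕ) : ZMod 5) = (a' : ZMod 5) ^ 2 + (b' : ZMod 5) ^ 2 := by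
    have := congrArg (fun z : ℤ => (z : ZMod 5)) hpa'b'
    push_cast at this
    exact this
  by_cases hdb : (5:ℤ) ∣ b'
  · -- 5 ∣ b' : quartic residue
    have hda : ¬ (5:ℤ) ∣ a' := fun h => (hone.mp h) hdb
    have hX : (5:ℤ) ∣ ((p:ℤ) * (a' ^ 2 - b' ^ 2) - 1) := by
      rw [hdvd_iff]
      have hb0 : ((b' : ZMod 5)) = 0 := (hdvd_iff b').mp hdb
      have ha0 : ((a' : ZMod 5)) ≠ 0 := fun h => hda ((hdvd_iff a').mpr h)
      push_cast
      rw [hp5', hb0]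
      have hgen : ∀ A : ZMod 5, A ≠ 0 → (A ^ 2 + 0 ^ 2) * (A ^ 2 - 0 ^ 2) - 1 = 0 := by decide
      exact hgen _ ha0
    have hY : (5:ℤ) ∣ (2 * (p:ℤ) * a' * b') := Dvd.dvd.mul_left hdb _
    obtain ⟨x, hx⟩ := hX
    obtain ⟨y, hy⟩ := hY
    have hx' : ((p:ℂ) * ((a':ℂ) ^ 2 - (b':ℂ) ^ 2) - 1) = 5 * (x:ℂ) := by
      exact_mod_cast congrArg (Int.cast : ℤ → ℂ) hx
    have hy' : (2 * (p:ℂ) * (a':ℂ) * (b':ℂ)) = 5 * (y:ℂ) := by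
      exact_mod_cast congrArg (Int.cast : ℤ → ℂ) hy
    set W : ℂ := (x:ℂ) + (y:ℂ) * Complex.I with hW
    have hWT : W ∈ T := add_mem (by exact_mod_cast Subalgebra.intCast_mem T x)
      (mul_mem (by exact_mod_cast Subalgebra.intCast_mem T y) hIT)
    have hPJ : (p:ℂ) * J ^ 2 = 1 + 5 * W := by
      rw [hJval, hW]
      linear_combination hx' + Complex.I * hy' + ((p:ℂ) * (b':ℂ)^2) * Complex.I_sq
    have ht2T : c * t * G ^ 3 + W - 2 * c * W - 5 * c * W ^ 2 ∈ T := by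
      refine sub_mem (sub_mem (add_mem (mul_mem (mul_mem (hχT _) htT) (pow_mem hGT 3)) hWT) ?_) ?_
      · exact mul_mem (mul_mem (by exact_mod_cast Subalgebra.natCast_mem T 2) (hχT _)) hWT
      · exact mul_mem (mul_mem (by exact_mod_cast Subalgebra.natCast_mem T 5) (hχT _)) (pow_mem hWT 2)
    have heps : c = ((1:ℤ) : ℂ) := by
      refine quartic_root_eq T hTint hIT c hc4 1 (Or.inl rfl) _ ht2T ?_
      push_cast
      linear_combination hmain + (1 - c * (1 + 5 * W + (p:ℂ) * J ^ 2)) * hPJ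
    have hc1 : χ (5 : ZMod p) = 1 := by rw [← hcdef]; simpa using heps
    exact iff_of_true (key5.mp hc1) hdb
  · -- 5 ∤ b' : quartic non-residue
    have hda : (5:ℤ) ∣ a' := hone.mpr hdb
    have hX : (5:ℤ) ∣ ((p:ℤ) * (a' ^ 2 - b' ^ 2) + 1) := by
      rw [hdvd_iff]
      have ha0 : ((a' : ZMod 5)) = 0 := (hdvd_iff a').mp hda
      have hb0 : ((b' : ZMod 5)) ≠ 0 := fun h => hdb ((hdvd_iff b').mpr h)
      push_cast
      rw [hp5', ha0]
      have hgen : ∀ B : ZMod 5, B ≠ 0 → (0 ^ 2 + B ^ 2) * (0 ^ 2 - B ^ 2) + 1 = 0 := by decide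
      exact hgen _ hb0
    have hY : (5:ℤ) ∣ (2 * (p:ℤ) * a' * b') := (hda.mul_left (2 * (p:ℤ))).mul_right b'
    obtain ⟨x, hx⟩ := hX
    obtain ⟨y, hy⟩ := hY
    have hx' : ((p:ℂ) * ((a':ℂ) ^ 2 - (b':ℂ) ^ 2) + 1) = 5 * (x:ℂ) := by
      exact_mod_cast congrArg (Int.cast : ℤ → ℂ) hx
    have hy' : (2 * (p:ℂ) * (a':ℂ) * (b':ℂ)) = 5 * (y:ℂ) := by
      exact_mod_cast congrArg (Int.cast : ℤ → ℂ) hy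
    set W : ℂ := (x:ℂ) + (y:ℂ) * Complex.I with hW
    have hWT : W ∈ T := add_mem (by exact_mod_cast Subalgebra.intCast_mem T x)
      (mul_mem (by exact_mod_cast Subalgebra.intCast_mem T y) hIT)
    have hPJ : (p:ℂ) * J ^ 2 = -1 + 5 * W := by
      rw [hJval, hW]
      linear_combination hx' + Complex.I * hy' + ((p:ℂ) * (b':ℂ)^2) * Complex.I_sq
    have ht2T : c * t * G ^ 3 + W + 2 * c * W - 5 * c * W ^ 2 ∈ T := by
      refine sub_mem (add_mem (add_mem (mul_mem (mul_mem (hχT _) htT) (pow_mem hGT 3)) hWT) ?_) ?_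
      · exact mul_mem (mul_mem (by exact_mod_cast Subalgebra.natCast_mem T 2) (hχT _)) hWT
      · exact mul_mem (mul_mem (by exact_mod_cast Subalgebra.natCast_mem T 5) (hχT _)) (pow_mem hWT 2)
    have heps : c = ((-1:ℤ) : ℂ) := by
      refine quartic_root_eq T hTint hIT c hc4 (-1) (Or.inr rfl) _ ht2T ?_
      push_cast
      linear_combination hmain + (1 - c * ((p:ℂ) * J ^ 2 - 1 + 5 * W)) * hPJ
    refine iff_of_false (fun h => ?_) hdb
    have hc1 : χ (5 : ZMod p) = 1 := key5.mpr h
    rw [← hcdef, heps] at hc1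
    norm_num at hc1

theorem quartic_residue_five (p : ℕ) (hp : p.Prime) (h4 : p % 4 = 1)
    (h5 : p % 5 = 1 ∨ p % 5 = 4) (a b : ℤ) (hab : (p : ℤ) = a ^ 2 + b ^ 2)
    (ha : Odd a) (hb : Even b) :
    ((5 : ℕ) ^ ((p - 1) / 4) ≡ 1 [MOD p] ↔ (5 : ℤ) ∣ b) ∧
      ((5 : ℤ) ∣ b ↔ ¬ (5 : ℤ) ∣ a) := by
  haveI : Fact p.Prime := ⟨hp⟩
  obtain ⟨a', b', hpab', ha', hb', hiff⟩ := quartic_core p hp h4 h5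
  have huniq : b' = b ∨ b' = -b := two_sq_unique p hp a b a' b' hab hpab' ha hb ha' hb'
  have hbb : ((5:ℤ) ∣ b' ↔ (5:ℤ) ∣ b) := by
    rcases huniq with rfl | h
    · exact Iff.rfl
    · rw [h]; exact dvd_neg
  have hmod : ((5:ℕ) ^ ((p-1)/4) ≡ 1 [MOD p]) ↔ ((5 : ZMod p) ^ ((p-1)/4) = 1) := by
    have h := ZMod.natCast_eq_natCast_iff ((5:ℕ)^((p-1)/4)) 1 p
    rw [← h]
    push_cast
    rfl
  rw [hmod, hiff, hbb]
  exact ⟨Iff.rfl, five_dvd_iff p h5 b a (by rw [hab]; ring)⟩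
end Char
end
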